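/- arXiv:math/0601386 — 2 statements merged into one kernel-verified Lean document; each statement's English description precedes it below -/
import Mathlib

section
/- In a complete stratified precubical set the composites, degeneracies and connections satisfy: ε_k∂_k^−x ∘_k x = x = x ∘_k ε_k∂_k^+x for every n-cube x and 1 ≤ k ≤ n; Γ_k^+x ∘_k Γ_k^−x = ε_{k+1}x; and Γ_k^+x ∘_{k+1} Γ_k^−x = ε_k x. -/
namespace CubicalNerve

/-- Signs: `true` is `+`, `false` is `−`, as an integer `±1`. -/
def sgn (α : Bool) : ℤ := if α then 1 else -1

/-- A stratified precubical set: a sequence of sets `X n` with face operations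
`∂_i^α : X n → X (n-1)` (with `i : Fin n`, i.e. `i+1` in the paper's 1-indexing)
satisfying the precubical relations, together with a class of thin `n`-cubes for
`n ≥ 1` (a `0`-cube is never thin). -/
structure SPS where
  X : ℕ → Type
  face : ∀ {n : ℕ}, Fin n → Bool → X n → X (n - 1)
  face_rel : ∀ {n : ℕ} (j : Fin n) (i : Fin (n - 1)) (h : (j : ℕ) ≤ (i : ℕ)) (α β : Bool)
      (x : X n),
    face i α (face j β x) =
      face ⟨(j : ℕ), lt_of_le_of_lt h i.isLt⟩ β
        (face ⟨(i : ℕ) + 1, by have := i.isLt; omega⟩ α x)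
  thin : ∀ {n : ℕ}, X n → Prop
  thin_zero : ∀ x : X 0, ¬ thin x

/-- The face operation `∂_i^α` with a 1-indexed natural number index (clamped into
range); the identity map in dimension `0`. -/
def SPS.faceN (P : SPS) (i : ℕ) (α : Bool) : ∀ {n : ℕ}, P.X n → P.X (n - 1)
  | 0, x => x
  | m + 1, x =>
      P.face (⟨min (i - 1) m, Nat.lt_succ_of_le (Nat.min_le_right _ _)⟩ : Fin (m + 1)) α x

/-- The action of a nonidentity precubical operation, written as a nonempty list
`(p :: L)` of 1-indexed (index, sign) pairs composed right-to-left (so the last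
entry of the list is applied first), on a box or shell `b` (given as a family of
`m`-cubes indexed by all of `Fin (m+1) × Bool`): the last factor picks out an entry
of `b`, and the remaining factors act by face operations. -/
def SPS.apBoxAux (P : SPS) {m : ℕ} (b : Fin (m + 1) → Bool → P.X m) :
    (ℕ × Bool) → (L : List (ℕ × Bool)) → P.X (m - L.length)
  | p, [] => b ⟨min (p.1 - 1) m, Nat.lt_succ_of_le (Nat.min_le_right _ _)⟩ p.2
  | p, q :: L => P.faceN p.1 p.2 (P.apBoxAux b q L)

/-- `L` is the standard decomposition of a precubical operation on `n`-cubes: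
its 1-indexed indices are strictly increasing and lie in `{1, …, n}`. -/
def IsStdList (n : ℕ) (L : List (ℕ × Bool)) : Prop :=
  L.Chain' (fun p q => p.1 < q.1) ∧ ∀ p ∈ L, 1 ≤ p.1 ∧ p.1 ≤ n

/-- Insertion of a factor into a standard decomposition, preserving the order. -/
def insSorted (a : ℕ × Bool) : List (ℕ × Bool) → List (ℕ × Bool)
  | [] => [a]
  | p :: L => if a.1 ≤ p.1 then a :: p :: L else p :: insSorted a L

/-- The standard decomposition `L` has constant sign: `(−1)^{i(r)−r} α(r)` is the same
for all `r`, where `∂_{i(r)}^{α(r)}` is the `r`-th factor (`r` 1-indexed). -/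
def ConstSign (L : List (ℕ × Bool)) : Prop :=
  ∃ ε : ℤ, ∀ (t : ℕ) (h : t < L.length),
    (-1 : ℤ) ^ ((L.get ⟨t, h⟩).1 + t + 1) * sgn (L.get ⟨t, h⟩).2 = ε

/-- The precubical operation with standard decomposition `L` (on `n`-cubes) is
complementary to the face operation `∂_k^γ` (`k` 1-indexed): `L` has no factor
`∂_k^±`, and inserting `∂_k^{−γ}` produces a standard decomposition with constant
sign. -/
def ComplOp (n k : ℕ) (γ : Bool) (L : List (ℕ × Bool)) : Prop :=
  IsStdList n L ∧ (∀ p ∈ L, p.1 ≠ k) ∧ ConstSign (insSorted (k, !γ) L)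

/-- The face operation `∂_l^δ` is complementary to `∂_k^γ` (1-indexed). -/
def FaceComplOp (n k : ℕ) (γ : Bool) (l : ℕ) (δ : Bool) : Prop := ComplOp n k γ [(l, δ)]

/-- `b` is an `(m+1)`-box opposite `∂_k^γ`, recorded as a total family of `m`-cubes
whose value at `(k, γ)` is irrelevant: the compatibility conditions
`∂_i^α b_j^β = ∂_j^β b_{i+1}^α` hold whenever neither index involved is `(k, γ)`. -/
def SPS.IsBox (P : SPS) {m : ℕ} (k : Fin (m + 1)) (γ : Bool)
    (b : Fin (m + 1) → Bool → P.X m) : Prop :=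
  ∀ (j : Fin (m + 1)) (i : Fin m) (h : (j : ℕ) ≤ (i : ℕ)) (α β : Bool),
    ((j, β) : Fin (m + 1) × Bool) ≠ (k, γ) →
    ((⟨(i : ℕ) + 1, by have := i.isLt; omega⟩, α) : Fin (m + 1) × Bool) ≠ (k, γ) →
    P.face i α (b j β) =
      P.face ⟨(j : ℕ), lt_of_le_of_lt h i.isLt⟩ β
        (b ⟨(i : ℕ) + 1, by have := i.isLt; omega⟩ α)

/-- `s` is an `(m+1)`-shell: a family of `m`-cubes indexed by all the face operations,
with `∂_i^α s_j^β = ∂_j^β s_{i+1}^α` for `i ≥ j`. -/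
def SPS.IsShell (P : SPS) {m : ℕ} (s : Fin (m + 1) → Bool → P.X m) : Prop :=
  ∀ (j : Fin (m + 1)) (i : Fin m) (h : (j : ℕ) ≤ (i : ℕ)) (α β : Bool),
    P.face i α (s j β) =
      P.face ⟨(j : ℕ), lt_of_le_of_lt h i.isLt⟩ β
        (s ⟨(i : ℕ) + 1, by have := i.isLt; omega⟩ α)

/-- The box `b` opposite `∂_k^γ` is admissible: `θ b` is thin for every non-identity
precubical operation `θ` complementary to `∂_k^γ`. -/
def SPS.AdmBox (P : SPS) {m : ℕ} (k : Fin (m + 1)) (γ : Bool)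
    (b : Fin (m + 1) → Bool → P.X m) : Prop :=
  P.IsBox k γ b ∧
  ∀ (p : ℕ × Bool) (L : List (ℕ × Bool)),
    ComplOp (m + 1) ((k : ℕ) + 1) γ (p :: L) → P.thin (P.apBoxAux b p L)

/-- The shell `s` is admissible: there are distinct, mutually non-complementary face
operations `∂_k^γ` and `∂_l^δ` with `s_k^γ = s_l^δ` such that the boxes obtained by
removing either are admissible. -/
def SPS.AdmShell (P : SPS) {m : ℕ} (s : Fin (m + 1) → Bool → P.X m) : Prop :=
  P.IsShell s ∧
  ∃ (k l : Fin (m + 1)) (γ δ : Bool),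
    ((k, γ) : Fin (m + 1) × Bool) ≠ (l, δ) ∧
    ¬ FaceComplOp (m + 1) ((k : ℕ) + 1) γ ((l : ℕ) + 1) δ ∧
    ¬ FaceComplOp (m + 1) ((l : ℕ) + 1) δ ((k : ℕ) + 1) γ ∧
    s k γ = s l δ ∧ P.AdmBox k γ s ∧ P.AdmBox l δ s

/-- `x` is a filler of the box `b` opposite `∂_k^γ`. -/
def SPS.FillsBox (P : SPS) {m : ℕ} (k : Fin (m + 1)) (γ : Bool)
    (b : Fin (m + 1) → Bool → P.X m) (x : P.X (m + 1)) : Prop :=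
  ∀ (i : Fin (m + 1)) (α : Bool), ((i, α) : Fin (m + 1) × Bool) ≠ (k, γ) →
    P.face i α x = b i α

/-- `x` is a filler of the shell `s`. -/
def SPS.FillsShell (P : SPS) {m : ℕ} (s : Fin (m + 1) → Bool → P.X m)
    (x : P.X (m + 1)) : Prop :=
  ∀ (i : Fin (m + 1)) (α : Bool), P.face i α x = s i α

/-- `P` is a *complete* stratified precubical set: every admissible box and every
admissible shell has a unique thin filler, and if `x` is the thin filler of an
admissible box `b` opposite `∂_k^γ` all of whose entries are thin, then the
additional face `∂_k^γ x` is thin as well. -/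
def SPS.IsComplete (P : SPS) : Prop :=
  (∀ (m : ℕ) (k : Fin (m + 1)) (γ : Bool) (b : Fin (m + 1) → Bool → P.X m),
     P.AdmBox k γ b → ∃! x : P.X (m + 1), P.thin x ∧ P.FillsBox k γ b x) ∧
  (∀ (m : ℕ) (s : Fin (m + 1) → Bool → P.X m),
     P.AdmShell s → ∃! x : P.X (m + 1), P.thin x ∧ P.FillsShell s x) ∧
  (∀ (m : ℕ) (k : Fin (m + 1)) (γ : Bool) (b : Fin (m + 1) → Bool → P.X m)
     (x : P.X (m + 1)),
     P.AdmBox k γ b → P.thin x → P.FillsBox k γ b x →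
     (∀ (i : Fin (m + 1)) (α : Bool), ((i, α) : Fin (m + 1) × Bool) ≠ (k, γ) →
        P.thin (b i α)) →
     P.thin (P.face k γ x))

/-- `E` is the system of degeneracy operations `ε` of a complete stratified precubical
set: `E n k x` (`x` an `n`-cube, `k : Fin (n+1)`, i.e. `ε_{k+1}` in 1-indexed notation)
is thin with faces `∂_i^α ε_k x = ε_{k-1} ∂_i^α x` for `i < k`, `∂_k^± ε_k x = x`,
and `∂_i^α ε_k x = ε_k ∂_{i-1}^α x` for `i > k`. -/
def SPS.IsDegSys (P : SPS) (E : ∀ n : ℕ, Fin (n + 1) → P.X n → P.X (n + 1)) : Prop :=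
  (∀ (n : ℕ) (k : Fin (n + 1)) (x : P.X n), P.thin (E n k x)) ∧
  (∀ (n : ℕ) (k : Fin (n + 1)) (α : Bool) (x : P.X n), P.face k α (E n k x) = x) ∧
  (∀ (n : ℕ) (k i : Fin (n + 2)) (α : Bool) (x : P.X (n + 1)) (h : (i : ℕ) < (k : ℕ)),
     P.face i α (E (n + 1) k x) =
       E n ⟨(k : ℕ) - 1, by have := k.isLt; omega⟩
         (P.face ⟨(i : ℕ), by have := k.isLt; omega⟩ α x)) ∧
  (∀ (n : ℕ) (k i : Fin (n + 2)) (α : Bool) (x : P.X (n + 1)) (h : (k : ℕ) < (i : ℕ)),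
     P.face i α (E (n + 1) k x) =
       E n ⟨(k : ℕ), by have := i.isLt; omega⟩
         (P.face ⟨(i : ℕ) - 1, by have := i.isLt; omega⟩ α x))

/-- `Γ` is the system of connection operations of a complete stratified precubical set
(`Γ n k γ x` for `x` an `(n+1)`-cube and `k : Fin (n+1)`, i.e. `Γ_{k+1}^γ`). -/
def SPS.IsConnSys (P : SPS) (E : ∀ n : ℕ, Fin (n + 1) → P.X n → P.X (n + 1))
    (Γ : ∀ n : ℕ, Fin (n + 1) → Bool → P.X (n + 1) → P.X (n + 2)) : Prop :=
  (∀ (n : ℕ) (k : Fin (n + 1)) (γ : Bool) (x : P.X (n + 1)), P.thin (Γ n k γ x)) ∧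
  (∀ (n : ℕ) (k : Fin (n + 1)) (γ : Bool) (x : P.X (n + 1)),
     P.face k.castSucc γ (Γ n k γ x) = x ∧ P.face k.succ γ (Γ n k γ x) = x) ∧
  (∀ (n : ℕ) (k : Fin (n + 1)) (γ : Bool) (x : P.X (n + 1)),
     P.face k.castSucc (!γ) (Γ n k γ x) = E n k (P.face k (!γ) x) ∧
     P.face k.succ (!γ) (Γ n k γ x) = E n k (P.face k (!γ) x)) ∧
  (∀ (n : ℕ) (k : Fin (n + 2)) (γ : Bool) (i : Fin (n + 3)) (α : Bool) (x : P.X (n + 2))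
     (h : (i : ℕ) < (k : ℕ)),
     P.face i α (Γ (n + 1) k γ x) =
       Γ n ⟨(k : ℕ) - 1, by have := k.isLt; omega⟩ γ
         (P.face ⟨(i : ℕ), by have := k.isLt; omega⟩ α x)) ∧
  (∀ (n : ℕ) (k : Fin (n + 2)) (γ : Bool) (i : Fin (n + 3)) (α : Bool) (x : P.X (n + 2))
     (h : (k : ℕ) + 1 < (i : ℕ)),
     P.face i α (Γ (n + 1) k γ x) =
       Γ n ⟨(k : ℕ), by have := i.isLt; omega⟩ γ
         (P.face ⟨(i : ℕ) - 1, by have := i.isLt; omega⟩ α x))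

/-- `G` is the system of composers of a complete stratified precubical set:
whenever `∂_k^+ x = ∂_k^- y`, the `(n+2)`-cube `G n k x y` is thin and has the faces
prescribed in the definition of the composer `G_k(x, y)` (all of them except the one
opposite `∂_k^-`). -/
def SPS.IsCompSys (P : SPS) (E : ∀ n : ℕ, Fin (n + 1) → P.X n → P.X (n + 1))
    (G : ∀ n : ℕ, Fin (n + 1) → P.X (n + 1) → P.X (n + 1) → P.X (n + 2)) : Prop :=
  (∀ (n : ℕ) (k : Fin (n + 1)) (x y : P.X (n + 1)),
     P.face k true x = P.face k false y → P.thin (G n k x y)) ∧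
  (∀ (n : ℕ) (k : Fin (n + 1)) (x y : P.X (n + 1)),
     P.face k true x = P.face k false y →
       P.face k.castSucc true (G n k x y) = y ∧
       P.face k.succ false (G n k x y) = x ∧
       P.face k.succ true (G n k x y) = E n k (P.face k true y)) ∧
  (∀ (n : ℕ) (k : Fin (n + 2)) (i : Fin (n + 3)) (α : Bool) (x y : P.X (n + 2)),
     P.face k true x = P.face k false y → ∀ h : (i : ℕ) < (k : ℕ),
     P.face i α (G (n + 1) k x y) =
       G n ⟨(k : ℕ) - 1, by have := k.isLt; omega⟩
         (P.face ⟨(i : ℕ), by have := k.isLt; omega⟩ α x)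
         (P.face ⟨(i : ℕ), by have := k.isLt; omega⟩ α y)) ∧
  (∀ (n : ℕ) (k : Fin (n + 2)) (i : Fin (n + 3)) (α : Bool) (x y : P.X (n + 2)),
     P.face k true x = P.face k false y → ∀ h : (k : ℕ) + 1 < (i : ℕ),
     P.face i α (G (n + 1) k x y) =
       G n ⟨(k : ℕ), by have := i.isLt; omega⟩
         (P.face ⟨(i : ℕ) - 1, by have := i.isLt; omega⟩ α x)
         (P.face ⟨(i : ℕ) - 1, by have := i.isLt; omega⟩ α y))

/-- The composite `x ∘_k y = ∂_k^- G_k(x, y)`. -/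
def SPS.cmp (P : SPS) (G : ∀ n : ℕ, Fin (n + 1) → P.X (n + 1) → P.X (n + 1) → P.X (n + 2))
    {n : ℕ} (k : Fin (n + 1)) (x y : P.X (n + 1)) : P.X (n + 1) :=
  P.face k.castSucc false (G n k x y)


section Aux

variable {P : SPS}

/-- `c` is a degeneracy `ε_d` (1-indexed degenerate direction `d`). -/
def EType (P : SPS) (E : ∀ n : ℕ, Fin (n + 1) → P.X n → P.X (n + 1)) :
    ∀ {M : ℕ}, ℕ → P.X M → Prop
  | 0, _, _ => False
  | (M' + 1), d, c => ∃ (j : Fin (M' + 1)) (u : P.X M'), ((j : ℕ) + 1 = d) ∧ c = E M' j u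

/-- `c` is a composer cube `G` with special pair `(d, d+1)` (1-indexed). -/
def GType (P : SPS)
    (G : ∀ n : ℕ, Fin (n + 1) → P.X (n + 1) → P.X (n + 1) → P.X (n + 2)) :
    ∀ {M : ℕ}, ℕ → P.X M → Prop
  | 0, _, _ => False
  | 1, _, _ => False
  | (M' + 2), d, c => ∃ (k : Fin (M' + 1)) (x y : P.X (M' + 1)),
      ((k : ℕ) + 1 = d) ∧ P.face k true x = P.face k false y ∧ c = G M' k x y

variable {E : ∀ n : ℕ, Fin (n + 1) → P.X n → P.X (n + 1)}
variable {G : ∀ n : ℕ, Fin (n + 1) → P.X (n + 1) → P.X (n + 1) → P.X (n + 2)}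

lemma EType.thinc (hE : P.IsDegSys E) : ∀ {M d : ℕ} {c : P.X M},
    EType P E d c → P.thin c
  | M + 1, d, c, h => by obtain ⟨j, u, -, rfl⟩ := h; exact hE.1 _ _ _

lemma GType.thinc (hG : P.IsCompSys E G) : ∀ {M d : ℕ} {c : P.X M},
    GType P G d c → P.thin c
  | M + 2, d, c, h => by obtain ⟨j, x, y, -, hm, rfl⟩ := h; exact hG.1 _ _ _ _ hm

lemma EType.bnd : ∀ {M d : ℕ} {c : P.X M}, EType P E d c → 1 ≤ d ∧ d ≤ M
  | M + 1, d, c, h => by obtain ⟨j, u, hj, -⟩ := h; have := j.isLt; omega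

lemma GType.bnd : ∀ {M d : ℕ} {c : P.X M}, GType P G d c → 1 ≤ d ∧ d + 1 ≤ M
  | M + 2, d, c, h => by obtain ⟨j, x, y, hj, -⟩ := h; have := j.isLt; omega

lemma EType_face (hE : P.IsDegSys E) : ∀ {M : ℕ} (c : P.X M) {d i : ℕ} (α : Bool),
    EType P E d c → 1 ≤ i → i ≤ M → i ≠ d →
    EType P E (if i < d then d - 1 else d) (P.faceN i α c)
  | M' + 1, c, d, i, α, h, hi1, hiM, hid => by
    obtain ⟨j, u, hjd, rfl⟩ := h
    show EType P E _ (P.face ⟨min (i - 1) M', _⟩ α (E M' j u))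
    have hmin : min (i - 1) M' = i - 1 := by omega
    rcases Nat.lt_or_ge (i - 1) (j : ℕ) with hc | hc
    · -- i < d
      have hM : 1 ≤ M' := by have := j.isLt; omega
      obtain ⟨M'', rfl⟩ : ∃ M'', M' = M'' + 1 := ⟨M' - 1, by omega⟩
      rw [if_pos (by omega)]
      rw [hE.2.2.1 M'' j ⟨min (i - 1) (M'' + 1), by omega⟩ α u (by simpa [hmin] using hc)]
      exact ⟨⟨(j : ℕ) - 1, by omega⟩, _, by simp; omega, rfl⟩
    · -- i > d
      have hne : (j : ℕ) < i - 1 := by omega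
      have hM : 1 ≤ M' := by omega
      obtain ⟨M'', rfl⟩ : ∃ M'', M' = M'' + 1 := ⟨M' - 1, by omega⟩
      rw [if_neg (by omega)]
      rw [hE.2.2.2 M'' j ⟨min (i - 1) (M'' + 1), by omega⟩ α u (by simpa [hmin] using hne)]
      exact ⟨⟨(j : ℕ), by omega⟩, _, by simp; omega, rfl⟩

end Aux

section Aux2

variable {P : SPS}
variable {E : ∀ n : ℕ, Fin (n + 1) → P.X n → P.X (n + 1)}
variable {Γ : ∀ n : ℕ, Fin (n + 1) → Bool → P.X (n + 1) → P.X (n + 2)}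
variable {G : ∀ n : ℕ, Fin (n + 1) → P.X (n + 1) → P.X (n + 1) → P.X (n + 2)}

lemma faceN_eq {M : ℕ} (c : P.X (M + 1)) (i : ℕ) (α : Bool) (hle : i ≤ M + 1)
    (h : i - 1 < M + 1) : P.faceN i α c = P.face ⟨i - 1, h⟩ α c := by
  show P.face _ α c = _
  congr 1
  exact Fin.ext (by simp; omega)

/-- Commutation of faces in convenient form. -/
lemma frel {n : ℕ} (z : P.X (n + 2)) {a b : ℕ} (hab : a ≤ b) (ha : a < n + 2)
    (hb : b < n + 1) (hb1 : b + 1 < n + 2) (α β : Bool) :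
    P.face ⟨b, hb⟩ β (P.face ⟨a, ha⟩ α z) =
    P.face ⟨a, by omega⟩ α (P.face ⟨b + 1, hb1⟩ β z) :=
  P.face_rel ⟨a, ha⟩ ⟨b, hb⟩ hab β α z

lemma match_lo {n : ℕ} {x y : P.X (n + 2)} {k : Fin (n + 2)}
    (h : P.face k true x = P.face k false y) {iv : ℕ} (hik : iv < (k : ℕ)) (α : Bool)
    (h1 : iv < n + 2) (h2 : (k : ℕ) - 1 < n + 1) :
    P.face ⟨(k : ℕ) - 1, h2⟩ true (P.face ⟨iv, h1⟩ α x) =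
    P.face ⟨(k : ℕ) - 1, h2⟩ false (P.face ⟨iv, h1⟩ α y) := by
  have hm : P.face ⟨(k : ℕ), k.isLt⟩ true x = P.face ⟨(k : ℕ), k.isLt⟩ false y := h
  have e1 := frel (P := P) x (a := iv) (b := (k : ℕ) - 1) (by omega) h1 h2 (by omega) α true
  have e2 := frel (P := P) y (a := iv) (b := (k : ℕ) - 1) (by omega) h1 h2 (by omega) α false
  rw [e1, e2]
  have ek : ((k : ℕ) - 1) + 1 = (k : ℕ) := by omega
  rw [show (⟨(k : ℕ) - 1 + 1, by omega⟩ : Fin (n + 2)) = ⟨(k : ℕ), k.isLt⟩ from Fin.ext ek,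
    hm]

lemma match_hi {n : ℕ} {x y : P.X (n + 2)} {k : Fin (n + 2)}
    (h : P.face k true x = P.face k false y) {iv : ℕ} (hik : (k : ℕ) < iv) (α : Bool)
    (h1 : iv < n + 2) (h2 : (k : ℕ) < n + 1) :
    P.face ⟨(k : ℕ), h2⟩ true (P.face ⟨iv, h1⟩ α x) =
    P.face ⟨(k : ℕ), h2⟩ false (P.face ⟨iv, h1⟩ α y) := by
  have hm : P.face ⟨(k : ℕ), k.isLt⟩ true x = P.face ⟨(k : ℕ), k.isLt⟩ false y := h
  have e1 := frel (P := P) x (a := (k : ℕ)) (b := iv - 1) (by omega) k.isLt (by omega)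
    (by omega) true α
  have e2 := frel (P := P) y (a := (k : ℕ)) (b := iv - 1) (by omega) k.isLt (by omega)
    (by omega) false α
  have eiv : (iv - 1) + 1 = iv := by omega
  rw [show (⟨iv - 1 + 1, by omega⟩ : Fin (n + 2)) = ⟨iv, h1⟩ from Fin.ext eiv] at e1 e2
  have e1' : P.face ⟨(k : ℕ), h2⟩ true (P.face ⟨iv, h1⟩ α x)
      = P.face ⟨iv - 1, by omega⟩ α (P.face ⟨(k : ℕ), k.isLt⟩ true x) := by
    rw [← e1]
  rw [e1', hm, e2]

lemma GType_face (hG : P.IsCompSys E G) : ∀ {M : ℕ} (c : P.X M) {d i : ℕ} (α : Bool),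
    GType P G d c → 1 ≤ i → i ≤ M → i ≠ d → i ≠ d + 1 →
    GType P G (if i < d then d - 1 else d) (P.faceN i α c)
  | M' + 2, c, d, i, α, h, hi1, hiM, hid, hid1 => by
    obtain ⟨k, x, y, hkd, hm, rfl⟩ := h
    rw [faceN_eq _ i α hiM (by omega)]
    rcases Nat.lt_or_ge (i - 1) (k : ℕ) with hc | hc
    · -- i < d
      have hM : 1 ≤ M' := by have := k.isLt; omega
      obtain ⟨M'', rfl⟩ : ∃ M'', M' = M'' + 1 := ⟨M' - 1, by omega⟩
      rw [if_pos (by omega)]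
      rw [hG.2.2.1 M'' k ⟨i - 1, by omega⟩ α x y hm hc]
      exact ⟨⟨(k : ℕ) - 1, by omega⟩, _, _, (by omega : (k : ℕ) - 1 + 1 = d - 1),
        match_lo hm hc α (by omega) (by omega), rfl⟩
    · -- i > d + 1
      have hc2 : (k : ℕ) + 1 < i - 1 := by omega
      have hM : 1 ≤ M' := by omega
      obtain ⟨M'', rfl⟩ : ∃ M'', M' = M'' + 1 := ⟨M' - 1, by omega⟩
      rw [if_neg (by omega)]
      rw [hG.2.2.2 M'' k ⟨i - 1, by omega⟩ α x y hm hc2]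
      exact ⟨⟨(k : ℕ), by omega⟩, _, _, (hkd : (k : ℕ) + 1 = d),
        match_hi hm (by omega : (k : ℕ) < i - 1 - 1) α
          (by omega : i - 1 - 1 < M'' + 2) (by omega : (k : ℕ) < M'' + 1), rfl⟩

lemma GType_face_top (hG : P.IsCompSys E G) : ∀ {M : ℕ} (c : P.X M) {d : ℕ},
    GType P G d c → EType P E d (P.faceN (d + 1) true c)
  | M' + 2, c, d, h => by
    obtain ⟨k, x, y, hkd, hm, rfl⟩ := h
    rw [faceN_eq _ (d + 1) true (by have := k.isLt; omega) (by have := k.isLt; omega)]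
    have : P.face ⟨d + 1 - 1, by have := k.isLt; omega⟩ true (G M' k x y)
        = P.face k.succ true (G M' k x y) := by
      congr 1
      exact Fin.ext (by simp [Fin.val_succ]; omega)
    rw [this, (hG.2.1 M' k x y hm).2.2]
    exact ⟨k, _, by omega, rfl⟩

end Aux2

section Aux3

variable {P : SPS}
variable {E : ∀ n : ℕ, Fin (n + 1) → P.X n → P.X (n + 1)}
variable {G : ∀ n : ℕ, Fin (n + 1) → P.X (n + 1) → P.X (n + 1) → P.X (n + 2)}

lemma chain_head_lt : ∀ {L : List (ℕ × Bool)} {p r : ℕ × Bool},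
    (p :: L).Chain' (fun a b => a.1 < b.1) → r ∈ L → p.1 < r.1 := by
  intro L
  induction L with
  | nil => intro p r _ hr; simp at hr
  | cons q L ih =>
    intro p r hc hr
    have h1 : p.1 < q.1 := (List.isChain_cons_cons.mp hc).1
    rcases List.mem_cons.mp hr with rfl | hr
    · exact h1
    · exact h1.trans (ih (List.isChain_cons_cons.mp hc).2 hr)

lemma chain_bound {N : ℕ} : ∀ (L : List (ℕ × Bool)) (p : ℕ × Bool),
    (p :: L).Chain' (fun a b => a.1 < b.1) → (∀ r ∈ p :: L, r.1 ≤ N) →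
    p.1 + L.length ≤ N := by
  intro L
  induction L with
  | nil => intro p _ hb; simpa using hb p (by simp)
  | cons q L ih =>
    intro p hc hb
    have h1 : p.1 < q.1 := (List.isChain_cons_cons.mp hc).1
    have h2 := ih q (List.isChain_cons_cons.mp hc).2 (fun r hr => hb r (List.mem_cons_of_mem _ hr))
    simp only [List.length_cons] at *
    omega

lemma constSign_tail {a : ℕ × Bool} {L : List (ℕ × Bool)} (h : ConstSign (a :: L)) :
    ConstSign L := by
  obtain ⟨ε, hε⟩ := h
  refine ⟨-ε, fun t ht => ?_⟩
  have h2 := hε (t + 1) (by simp; omega)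
  have hget : (a :: L).get ⟨t + 1, by simp; omega⟩ = L.get ⟨t, ht⟩ := rfl
  rw [hget] at h2
  set p := L.get ⟨t, ht⟩
  rw [show p.1 + (t + 1) + 1 = (p.1 + t + 1) + 1 from by omega, pow_succ] at h2
  rw [← h2]; ring

lemma kplus_sign {K : ℕ} : ∀ (L : List (ℕ × Bool)),
    L.Chain' (fun a b => a.1 < b.1) → (∀ r ∈ L, r.1 ≠ K) →
    ConstSign (insSorted (K, true) L) → ∀ r ∈ L, r.1 = K + 1 → r.2 = true := by
  intro L
  induction L with
  | nil => simp
  | cons p L ih =>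
    intro hc hne hcs r hr hrK
    by_cases hKp : K ≤ p.1
    · have hKlt : K < p.1 := lt_of_le_of_ne hKp (fun e => hne p (by simp) e.symm)
      simp only [insSorted, if_pos hKp] at hcs
      have hrp : r = p := by
        rcases List.mem_cons.mp hr with rfl | hr'
        · rfl
        · exfalso; have := chain_head_lt hc hr'; omega
      subst hrp
      obtain ⟨ε, hε⟩ := hcs
      have h0 := hε 0 (by simp)
      have h1 := hε 1 (by simp)
      simp only [List.get] at h0 h1
      rw [hrK] at h1
      cases hp2 : r.2
      · exfalso
        rw [hp2] at h1
        rw [show K + 1 + 1 + 1 = (K + 0 + 1) + 2 from by omega, pow_add] at h1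
        norm_num [sgn] at h0 h1
        have h3 : ((-1 : ℤ)) ^ (K + 0 + 1) = 0 := by linarith [h0, h1]
        exact pow_ne_zero _ (by norm_num) h3
      · rfl
    · have hplt : p.1 < K := by omega
      simp only [insSorted, if_neg hKp] at hcs
      rcases List.mem_cons.mp hr with rfl | hr'
      · omega
      · exact ih (List.isChain_cons.mp hc).2 (fun s hs => hne s (List.mem_cons_of_mem _ hs))
          (constSign_tail hcs) r hr' hrK

end Aux3

section Aux4

variable {P : SPS}
variable {E : ∀ n : ℕ, Fin (n + 1) → P.X n → P.X (n + 1)}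
variable {G : ∀ n : ℕ, Fin (n + 1) → P.X (n + 1) → P.X (n + 1) → P.X (n + 2)}

/-- The invariant maintained while applying the faces of a complementary operation:
the cube is a degeneracy or a composer whose special directions cannot be hit by
the remaining (smaller) face indices. -/
def Inv (P : SPS) (E : ∀ n : ℕ, Fin (n + 1) → P.X n → P.X (n + 1))
    (G : ∀ n : ℕ, Fin (n + 1) → P.X (n + 1) → P.X (n + 1) → P.X (n + 2))
    (K m : ℕ) {M : ℕ} (c : P.X M) : Prop :=
  (∃ d, EType P E d c ∧ (m ≤ d ∨ d = K)) ∨ (∃ d, GType P G d c ∧ (m ≤ d ∨ d = K))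

lemma Inv.thinc (hE : P.IsDegSys E) (hG : P.IsCompSys E G) {K m M : ℕ} {c : P.X M}
    (h : Inv P E G K m c) : P.thin c := by
  rcases h with ⟨d, hd, -⟩ | ⟨d, hd, -⟩
  · exact hd.thinc hE
  · exact hd.thinc hG

lemma inv_step (hE : P.IsDegSys E) (hG : P.IsCompSys E G) {M : ℕ} (c : P.X M)
    {K j i : ℕ} (α : Bool) (h : Inv P E G K j c) (hi1 : 1 ≤ i) (hij : i < j)
    (hiM : i ≤ M) (hiK : i ≠ K) (hsig : i = K + 1 → α = true) :
    Inv P E G K i (P.faceN i α c) := by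
  rcases h with ⟨d, hd, hj⟩ | ⟨d, hd, hj⟩
  · -- degeneracy
    have hne : i ≠ d := by rcases hj with hj | rfl <;> omega
    have hf := EType_face hE c α hd hi1 hiM hne
    left
    refine ⟨_, hf, ?_⟩
    rcases hj with hj | rfl
    · left; rw [if_pos (by omega)]; omega
    · by_cases hlt : i < d
      · left; rw [if_pos hlt]; omega
      · right; rw [if_neg hlt]
  · -- composer
    rcases hj with hj | rfl
    · -- i < j ≤ d
      have hlt : i < d := by omega
      have hf := GType_face hG c α hd hi1 hiM (by omega) (by omega)
      right
      refine ⟨_, hf, ?_⟩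
      left; rw [if_pos hlt]; omega
    · -- d = K
      by_cases hlt : i < d
      · have hf := GType_face hG c α hd hi1 hiM (by omega) (by omega)
        right
        refine ⟨_, hf, ?_⟩
        left; rw [if_pos hlt]; omega
      · by_cases htop : i = d + 1
        · have hα : α = true := hsig (by omega)
          subst hα htop
          exact Or.inl ⟨d, GType_face_top hG c hd, Or.inr rfl⟩
        · have hf := GType_face hG c α hd hi1 hiM hiK htop
          right
          refine ⟨_, hf, ?_⟩
          right; rw [if_neg hlt]

lemma main_rec (hE : P.IsDegSys E) (hG : P.IsCompSys E G) {m : ℕ}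
    (b : Fin (m + 2) → Bool → P.X (m + 1)) (K : ℕ)
    (hb : ∀ (q : ℕ) (hq1 : 1 ≤ q) (hq2 : q ≤ m + 2) (α : Bool), q ≠ K →
      (q = K + 1 → α = true) → Inv P E G K q (b ⟨q - 1, by omega⟩ α)) :
    ∀ (L : List (ℕ × Bool)) (p : ℕ × Bool),
      (p :: L).Chain' (fun a b => a.1 < b.1) → (∀ r ∈ p :: L, 1 ≤ r.1 ∧ r.1 ≤ m + 2) →
      (∀ r ∈ p :: L, r.1 ≠ K) → (∀ r ∈ p :: L, r.1 = K + 1 → r.2 = true) →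
      Inv P E G K p.1 (P.apBoxAux b p L) := by
  intro L
  induction L with
  | nil =>
    intro p hc hbnd hK hsig
    have hb1 : 1 ≤ p.1 := (hbnd p (by simp)).1
    have hb2 : p.1 ≤ m + 2 := (hbnd p (by simp)).2
    show Inv P E G K p.1 (b ⟨min (p.1 - 1) (m + 1), _⟩ p.2)
    rw [show (⟨min (p.1 - 1) (m + 1), Nat.lt_succ_of_le (Nat.min_le_right _ _)⟩ :
        Fin (m + 2)) = ⟨p.1 - 1, by omega⟩ from Fin.ext (by simp; omega)]
    exact hb p.1 hb1 hb2 p.2 (hK p (by simp)) (hsig p (by simp))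
  | cons q L ih =>
    intro p hc hbnd hK hsig
    have hc' := (List.isChain_cons_cons.mp hc).2
    have hinner := ih q hc' (fun r hr => hbnd r (List.mem_cons_of_mem _ hr))
      (fun r hr => hK r (List.mem_cons_of_mem _ hr))
      (fun r hr => hsig r (List.mem_cons_of_mem _ hr))
    have hbound : q.1 + L.length ≤ m + 2 := chain_bound L q hc'
      (fun r hr => (hbnd r (List.mem_cons_of_mem _ hr)).2)
    have hpq : p.1 < q.1 := (List.isChain_cons_cons.mp hc).1
    show Inv P E G K p.1 (P.faceN p.1 p.2 (P.apBoxAux b q L))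
    exact inv_step hE hG _ p.2 hinner (hbnd p (by simp)).1 hpq
      (by omega) (hK p (by simp)) (hsig p (by simp))

end Aux4

section Aux5

variable {P : SPS}
variable {E : ∀ n : ℕ, Fin (n + 1) → P.X n → P.X (n + 1)}
variable {G : ∀ n : ℕ, Fin (n + 1) → P.X (n + 1) → P.X (n + 1) → P.X (n + 2)}

def InvE (P : SPS) (E : ∀ n : ℕ, Fin (n + 1) → P.X n → P.X (n + 1))
    (K m : ℕ) {M : ℕ} (c : P.X M) : Prop :=
  ∃ d, EType P E d c ∧ (m ≤ d ∨ d = K)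

lemma inv_stepE (hE : P.IsDegSys E) {M : ℕ} (c : P.X M) {K j i : ℕ} (α : Bool)
    (h : InvE P E K j c) (hi1 : 1 ≤ i) (hij : i < j) (hiM : i ≤ M) (hiK : i ≠ K) :
    InvE P E K i (P.faceN i α c) := by
  rcases h with ⟨d, hd, hj⟩
  have hne : i ≠ d := by rcases hj with hj | rfl <;> omega
  refine ⟨_, EType_face hE c α hd hi1 hiM hne, ?_⟩
  rcases hj with hj | rfl
  · left; rw [if_pos (by omega)]; omega
  · by_cases hlt : i < d
    · left; rw [if_pos hlt]; omega
    · right; rw [if_neg hlt]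

lemma main_recE (hE : P.IsDegSys E) {m : ℕ}
    (b : Fin (m + 2) → Bool → P.X (m + 1)) (K : ℕ)
    (hb : ∀ (q : ℕ) (hq1 : 1 ≤ q) (hq2 : q ≤ m + 2) (α : Bool), q ≠ K →
      InvE P E K q (b ⟨q - 1, by omega⟩ α)) :
    ∀ (L : List (ℕ × Bool)) (p : ℕ × Bool),
      (p :: L).Chain' (fun a b => a.1 < b.1) → (∀ r ∈ p :: L, 1 ≤ r.1 ∧ r.1 ≤ m + 2) →
      (∀ r ∈ p :: L, r.1 ≠ K) →
      InvE P E K p.1 (P.apBoxAux b p L) := by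
  intro L
  induction L with
  | nil =>
    intro p hc hbnd hK
    have hb1 : 1 ≤ p.1 := (hbnd p (by simp)).1
    have hb2 : p.1 ≤ m + 2 := (hbnd p (by simp)).2
    show InvE P E K p.1 (b ⟨min (p.1 - 1) (m + 1), _⟩ p.2)
    rw [show (⟨min (p.1 - 1) (m + 1), Nat.lt_succ_of_le (Nat.min_le_right _ _)⟩ :
        Fin (m + 2)) = ⟨p.1 - 1, by omega⟩ from Fin.ext (by simp; omega)]
    exact hb p.1 hb1 hb2 p.2 (hK p (by simp))
  | cons q L ih =>
    intro p hc hbnd hK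
    have hc' := (List.isChain_cons_cons.mp hc).2
    have hinner := ih q hc' (fun r hr => hbnd r (List.mem_cons_of_mem _ hr))
      (fun r hr => hK r (List.mem_cons_of_mem _ hr))
    have hbound : q.1 + L.length ≤ m + 2 := chain_bound L q hc'
      (fun r hr => (hbnd r (List.mem_cons_of_mem _ hr)).2)
    have hpq : p.1 < q.1 := (List.isChain_cons_cons.mp hc).1
    show InvE P E K p.1 (P.faceN p.1 p.2 (P.apBoxAux b q L))
    exact inv_stepE hE _ p.2 hinner (hbnd p (by simp)).1 hpq (by omega) (hK p (by simp))

/-- The box consisting of the faces of a degeneracy is admissible (opposite either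
of the two faces in the degenerate direction). -/
lemma admBox_E (hE : P.IsDegSys E) {n : ℕ} (J : Fin (n + 2)) (x : P.X (n + 1)) (γ : Bool) :
    P.AdmBox J γ (fun i α => P.face i α (E (n + 1) J x)) := by
  constructor
  · intro j i h α β _ _
    exact P.face_rel j i h α β (E (n + 1) J x)
  · intro p L hcomp
    obtain ⟨⟨hchain, hbnd⟩, hneK, -⟩ := hcomp
    set C := E (n + 1) J x with hC
    have hCt : EType P E ((J : ℕ) + 1) C := ⟨J, x, rfl, rfl⟩
    have hseed : ∀ (q : ℕ) (hq1 : 1 ≤ q) (hq2 : q ≤ n + 2) (α : Bool), q ≠ (J : ℕ) + 1 →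
        InvE P E ((J : ℕ) + 1) q
          ((fun (i : Fin (n + 2)) α => P.face i α C) ⟨q - 1, by omega⟩ α) := by
      intro q hq1 hq2 α hqK
      show InvE P E ((J : ℕ) + 1) q (P.face ⟨q - 1, by omega⟩ α C)
      rw [← faceN_eq C q α hq2 (by omega)]
      refine ⟨_, EType_face hE C α hCt hq1 hq2 hqK, ?_⟩
      by_cases hlt : q < (J : ℕ) + 1
      · left; rw [if_pos hlt]; omega
      · right; rw [if_neg hlt]
    have := main_recE hE (fun (i : Fin (n + 2)) α => P.face i α C) ((J : ℕ) + 1) hseed L p hchain hbnd hneK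
    obtain ⟨d, hd, -⟩ := this
    exact hd.thinc hE

/-- The shell consisting of the faces of a degeneracy is admissible. -/
lemma admShell_E (hE : P.IsDegSys E) {n : ℕ} (J : Fin (n + 2)) (x : P.X (n + 1)) :
    P.AdmShell (fun i α => P.face i α (E (n + 1) J x)) := by
  constructor
  · intro j i h α β
    exact P.face_rel j i h α β (E (n + 1) J x)
  · refine ⟨J, J, false, true, by simp, ?_, ?_, ?_, admBox_E hE J x false, admBox_E hE J x true⟩
    · rintro ⟨-, hne, -⟩
      exact hne ((J : ℕ) + 1, true) (by simp) rfl
    · rintro ⟨-, hne, -⟩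
      exact hne ((J : ℕ) + 1, false) (by simp) rfl
    · show P.face J false (E (n + 1) J x) = P.face J true (E (n + 1) J x)
      rw [hE.2.1 (n + 1) J false x, hE.2.1 (n + 1) J true x]

/-- The box consisting of the faces of a composer `G_k(x,y)`, opposite `∂_{k+1}^-`,
is admissible. -/
lemma admBox_G (hE : P.IsDegSys E) (hG : P.IsCompSys E G) {n : ℕ} (k : Fin (n + 1))
    (x y : P.X (n + 1)) (hm : P.face k true x = P.face k false y) :
    P.AdmBox k.castSucc false (fun i α => P.face i α (G n k x y)) := by
  constructor
  · intro j i h α β _ _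
    exact P.face_rel j i h α β (G n k x y)
  · intro p L hcomp
    obtain ⟨⟨hchain, hbnd⟩, hneK, hcs⟩ := hcomp
    set C := G n k x y with hC
    have hCt : GType P G ((k : ℕ) + 1) C := ⟨k, x, y, rfl, hm, rfl⟩
    have hneK' : ∀ r ∈ p :: L, r.1 ≠ (k : ℕ) + 1 := hneK
    have hsig : ∀ r ∈ p :: L, r.1 = (k : ℕ) + 1 + 1 → r.2 = true :=
      kplus_sign (K := (k : ℕ) + 1) (p :: L) hchain hneK' hcs
    have hseed : ∀ (q : ℕ) (hq1 : 1 ≤ q) (hq2 : q ≤ n + 2) (α : Bool),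
        q ≠ (k : ℕ) + 1 → (q = (k : ℕ) + 1 + 1 → α = true) →
        Inv P E G ((k : ℕ) + 1) q
          ((fun (i : Fin (n + 2)) α => P.face i α C) ⟨q - 1, by omega⟩ α) := by
      intro q hq1 hq2 α hqK hqsig
      show Inv P E G ((k : ℕ) + 1) q (P.face ⟨q - 1, by omega⟩ α C)
      rw [← faceN_eq C q α hq2 (by omega)]
      by_cases htop : q = (k : ℕ) + 2
      · have hα : α = true := hqsig (by omega)
        subst hα htop
        exact Or.inl ⟨(k : ℕ) + 1, GType_face_top hG C hCt, Or.inr rfl⟩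
      · have hf := GType_face hG C α hCt hq1 hq2 hqK (by omega)
        right
        refine ⟨_, hf, ?_⟩
        by_cases hlt : q < (k : ℕ) + 1
        · left; rw [if_pos hlt]; omega
        · right; rw [if_neg hlt]
    exact (main_rec hE hG _ ((k : ℕ) + 1) hseed L p hchain hbnd hneK' hsig).thinc hE hG

end Aux5

section Aux6

variable {P : SPS}
variable {E : ∀ n : ℕ, Fin (n + 1) → P.X n → P.X (n + 1)}
variable {Γ : ∀ n : ℕ, Fin (n + 1) → Bool → P.X (n + 1) → P.X (n + 2)}
variable {G : ∀ n : ℕ, Fin (n + 1) → P.X (n + 1) → P.X (n + 1) → P.X (n + 2)}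

lemma S1 (hP : P.IsComplete) (hE : P.IsDegSys E) (hG : P.IsCompSys E G) :
    ∀ n : ℕ, ∀ (k : Fin (n + 1)) (x : P.X (n + 1)),
      G n k (E n k (P.face k false x)) x = E (n + 1) k.castSucc x := by
  intro n
  induction n using Nat.strong_induction_on with
  | _ n ih =>
  intro k x
  have hm : P.face k true (E n k (P.face k false x)) = P.face k false x :=
    hE.2.1 n k true (P.face k false x)
  have hbox := admBox_G (E := E) hE hG k (E n k (P.face k false x)) x hm
  obtain ⟨z, hz, huniq⟩ := hP.1 (n + 1) k.castSucc false _ hbox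
  have e1 : G n k (E n k (P.face k false x)) x = z :=
    huniq _ ⟨hG.1 n k _ x hm, fun i α _ => rfl⟩
  have e2 : E (n + 1) k.castSucc x = z := by
    refine huniq _ ⟨hE.1 (n + 1) k.castSucc x, ?_⟩
    intro i α hne
    show P.face i α (E (n + 1) k.castSucc x)
        = P.face i α (G n k (E n k (P.face k false x)) x)
    rcases Nat.lt_trichotomy (i : ℕ) (k : ℕ) with hik | hik | hik
    · -- i < k
      obtain ⟨n', rfl⟩ : ∃ n', n = n' + 1 := ⟨n - 1, by have := k.isLt; omega⟩
      rw [hG.2.2.1 n' k i α _ x hm hik]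
      rw [hE.2.2.1 (n' + 1) k.castSucc i α x (show (i : ℕ) < (k : ℕ) from hik)]
      rw [hE.2.2.1 n' k ⟨(i : ℕ), by have := k.isLt; omega⟩ α (P.face k false x)
        (show (i : ℕ) < (k : ℕ) from hik)]
      have hfr : P.face (⟨(i : ℕ), by have := k.isLt; omega⟩ : Fin (n' + 1)) α
            (P.face k false x)
          = P.face (⟨(k : ℕ) - 1, by have := k.isLt; omega⟩ : Fin (n' + 1)) false
            (P.face (⟨(i : ℕ), by have := i.isLt; omega⟩ : Fin (n' + 2)) α x) := by
        have h0 := frel (P := P) x (a := (i : ℕ)) (b := (k : ℕ) - 1) (by omega)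
          (by have := i.isLt; omega) (by have := k.isLt; omega)
          (by have := k.isLt; omega) α false
        rw [show (⟨(k : ℕ) - 1 + 1, by have := k.isLt; omega⟩ : Fin (n' + 2)) = k
          from Fin.ext (by simp; omega)] at h0
        exact h0.symm
      rw [hfr]
      rw [ih n' (by omega) ⟨(k : ℕ) - 1, by have := k.isLt; omega⟩
        (P.face ⟨(i : ℕ), by have := k.isLt; omega⟩ α x)]
      rfl
    · -- i = k : then α = true
      have hik' : i = k.castSucc := Fin.ext hik
      subst hik'
      cases α
      · exact absurd rfl hne
      · rw [(hG.2.1 n k _ x hm).1, hE.2.1 (n + 1) k.castSucc true x]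
    · -- i > k
      rcases Nat.lt_or_ge ((k : ℕ) + 1) (i : ℕ) with hik2 | hik2
      · -- i > k + 1
        obtain ⟨n', rfl⟩ : ∃ n', n = n' + 1 := ⟨n - 1, by have := i.isLt; omega⟩
        rw [hG.2.2.2 n' k i α _ x hm hik2]
        rw [hE.2.2.2 (n' + 1) k.castSucc i α x (show (k : ℕ) < (i : ℕ) from by omega)]
        rw [hE.2.2.2 n' k ⟨(i : ℕ) - 1, by have := i.isLt; omega⟩ α (P.face k false x)
          (show (k : ℕ) < (i : ℕ) - 1 from by omega)]
        have hfr : P.face (⟨(i : ℕ) - 1 - 1, by have := i.isLt; omega⟩ : Fin (n' + 1)) α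
              (P.face k false x)
            = P.face (⟨(k : ℕ), by have := k.isLt; omega⟩ : Fin (n' + 1)) false
              (P.face (⟨(i : ℕ) - 1, by have := i.isLt; omega⟩ : Fin (n' + 2)) α x) := by
          have h0 := frel (P := P) x (a := (k : ℕ)) (b := (i : ℕ) - 1 - 1) (by omega)
            (by have := k.isLt; omega) (by have := i.isLt; omega)
            (by have := i.isLt; omega) false α
          rw [show (⟨(i : ℕ) - 1 - 1 + 1, by have := i.isLt; omega⟩ : Fin (n' + 2))
            = ⟨(i : ℕ) - 1, by have := i.isLt; omega⟩ from Fin.ext (by simp; omega)] at h0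
          exact h0
        rw [hfr]
        rw [ih n' (by omega) ⟨(k : ℕ), by have := i.isLt; omega⟩
          (P.face ⟨(i : ℕ) - 1, by have := i.isLt; omega⟩ α x)]
        rfl
      · -- i = k + 1
        have hik' : i = k.succ := Fin.ext (by simp [Fin.val_succ]; omega)
        subst hik'
        cases α
        · rw [(hG.2.1 n k _ x hm).2.1,
            hE.2.2.2 n k.castSucc k.succ false x (by simp [Fin.val_succ])]
          rfl
        · rw [(hG.2.1 n k _ x hm).2.2,
            hE.2.2.2 n k.castSucc k.succ true x (by simp [Fin.val_succ])]
          rfl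
  exact e1.trans e2.symm

end Aux6

section Aux7

variable {P : SPS}
variable {E : ∀ n : ℕ, Fin (n + 1) → P.X n → P.X (n + 1)}
variable {Γ : ∀ n : ℕ, Fin (n + 1) → Bool → P.X (n + 1) → P.X (n + 2)}
variable {G : ∀ n : ℕ, Fin (n + 1) → P.X (n + 1) → P.X (n + 1) → P.X (n + 2)}

lemma S2 (hP : P.IsComplete) (hE : P.IsDegSys E) (hΓ : P.IsConnSys E Γ)
    (hG : P.IsCompSys E G) :
    ∀ n : ℕ, ∀ (k : Fin (n + 1)) (x : P.X (n + 1)),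
      G n k x (E n k (P.face k true x)) = Γ n k false x := by
  intro n
  induction n using Nat.strong_induction_on with
  | _ n ih =>
  intro k x
  have hm : P.face k true x = P.face k false (E n k (P.face k true x)) :=
    (hE.2.1 n k false (P.face k true x)).symm
  have hbox := admBox_G (E := E) hE hG k x (E n k (P.face k true x)) hm
  obtain ⟨z, hz, huniq⟩ := hP.1 (n + 1) k.castSucc false _ hbox
  have e1 : G n k x (E n k (P.face k true x)) = z :=
    huniq _ ⟨hG.1 n k x _ hm, fun i α _ => rfl⟩
  have e2 : Γ n k false x = z := by
    refine huniq _ ⟨hΓ.1 n k false x, ?_⟩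
    intro i α hne
    show P.face i α (Γ n k false x)
        = P.face i α (G n k x (E n k (P.face k true x)))
    rcases Nat.lt_trichotomy (i : ℕ) (k : ℕ) with hik | hik | hik
    · -- i < k
      obtain ⟨n', rfl⟩ : ∃ n', n = n' + 1 := ⟨n - 1, by have := k.isLt; omega⟩
      rw [hG.2.2.1 n' k i α x _ hm hik]
      rw [hE.2.2.1 n' k ⟨(i : ℕ), by have := k.isLt; omega⟩ α (P.face k true x)
        (show (i : ℕ) < (k : ℕ) from hik)]
      have hfr : P.face (⟨(i : ℕ), by have := k.isLt; omega⟩ : Fin (n' + 1)) α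
            (P.face k true x)
          = P.face (⟨(k : ℕ) - 1, by have := k.isLt; omega⟩ : Fin (n' + 1)) true
            (P.face (⟨(i : ℕ), by have := i.isLt; omega⟩ : Fin (n' + 2)) α x) := by
        have h0 := frel (P := P) x (a := (i : ℕ)) (b := (k : ℕ) - 1) (by omega)
          (by have := i.isLt; omega) (by have := k.isLt; omega)
          (by have := k.isLt; omega) α true
        rw [show (⟨(k : ℕ) - 1 + 1, by have := k.isLt; omega⟩ : Fin (n' + 2)) = k
          from Fin.ext (by simp; omega)] at h0
        exact h0.symm
      rw [hfr]
      rw [ih n' (by omega) ⟨(k : ℕ) - 1, by have := k.isLt; omega⟩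
        (P.face ⟨(i : ℕ), by have := i.isLt; omega⟩ α x)]
      rw [hΓ.2.2.2.1 n' k false i α x hik]
    · -- i = k : α = true
      have hik' : i = k.castSucc := Fin.ext hik
      subst hik'
      cases α
      · exact absurd rfl hne
      · rw [(hG.2.1 n k x _ hm).1]
        exact (hΓ.2.2.1 n k false x).1
    · rcases Nat.lt_or_ge ((k : ℕ) + 1) (i : ℕ) with hik2 | hik2
      · -- i > k + 1
        obtain ⟨n', rfl⟩ : ∃ n', n = n' + 1 := ⟨n - 1, by have := i.isLt; omega⟩
        rw [hG.2.2.2 n' k i α x _ hm hik2]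
        rw [hE.2.2.2 n' k ⟨(i : ℕ) - 1, by have := i.isLt; omega⟩ α (P.face k true x)
          (show (k : ℕ) < (i : ℕ) - 1 from by omega)]
        have hfr : P.face (⟨(i : ℕ) - 1 - 1, by have := i.isLt; omega⟩ : Fin (n' + 1)) α
              (P.face k true x)
            = P.face (⟨(k : ℕ), by have := k.isLt; omega⟩ : Fin (n' + 1)) true
              (P.face (⟨(i : ℕ) - 1, by have := i.isLt; omega⟩ : Fin (n' + 2)) α x) := by
          have h0 := frel (P := P) x (a := (k : ℕ)) (b := (i : ℕ) - 1 - 1) (by omega)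
            (by have := k.isLt; omega) (by have := i.isLt; omega)
            (by have := i.isLt; omega) true α
          rw [show (⟨(i : ℕ) - 1 - 1 + 1, by have := i.isLt; omega⟩ : Fin (n' + 2))
            = ⟨(i : ℕ) - 1, by have := i.isLt; omega⟩ from Fin.ext (by simp; omega)] at h0
          exact h0
        rw [hfr]
        rw [ih n' (by omega) ⟨(k : ℕ), by have := k.isLt; omega⟩
          (P.face ⟨(i : ℕ) - 1, by have := i.isLt; omega⟩ α x)]
        rw [hΓ.2.2.2.2 n' k false i α x hik2]
      · -- i = k + 1
        have hik' : i = k.succ := Fin.ext (by simp [Fin.val_succ]; omega)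
        subst hik'
        cases α
        · rw [(hG.2.1 n k x _ hm).2.1]
          exact (hΓ.2.1 n k false x).2
        · rw [(hG.2.1 n k x _ hm).2.2, hE.2.1 n k true (P.face k true x)]
          exact (hΓ.2.2.1 n k false x).2
  exact e1.trans e2.symm

end Aux7

section Aux8

variable {P : SPS}
variable {E : ∀ n : ℕ, Fin (n + 1) → P.X n → P.X (n + 1)}
variable {Γ : ∀ n : ℕ, Fin (n + 1) → Bool → P.X (n + 1) → P.X (n + 2)}
variable {G : ∀ n : ℕ, Fin (n + 1) → P.X (n + 1) → P.X (n + 1) → P.X (n + 2)}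

lemma S3 (hP : P.IsComplete) (hE : P.IsDegSys E) (hΓ : P.IsConnSys E Γ)
    (hG : P.IsCompSys E G) :
    ∀ n : ℕ, ∀ (k : Fin (n + 1)) (x : P.X (n + 1)),
      P.face (k.castSucc).castSucc false
          (G (n + 1) k.castSucc (Γ n k true x) (Γ n k false x))
        = E (n + 1) k.succ x := by
  intro n
  induction n using Nat.strong_induction_on with
  | _ n ih =>
  intro k x
  have hkn := k.isLt
  have hv1 : ((k.castSucc : Fin (n + 2)) : ℕ) = (k : ℕ) := rfl
  have hv2 : (((k.castSucc).castSucc : Fin (n + 3)) : ℕ) = (k : ℕ) := rfl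
  have hv3 : ((k.succ : Fin (n + 2)) : ℕ) = (k : ℕ) + 1 := rfl
  have hmw : P.face k.castSucc true (Γ n k true x)
      = P.face k.castSucc false (Γ n k false x) := by
    rw [(hΓ.2.1 n k true x).1, (hΓ.2.1 n k false x).1]
  set w := G (n + 1) k.castSucc (Γ n k true x) (Γ n k false x) with hw
  have hthinw : P.thin w := hG.1 (n + 1) k.castSucc _ _ hmw
  have hbox := admBox_G (E := E) hE hG k.castSucc (Γ n k true x) (Γ n k false x) hmw
  have hent : ∀ (i : Fin (n + 3)) (α : Bool),
      ((i, α) : Fin (n + 3) × Bool) ≠ ((k.castSucc).castSucc, false) →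
      P.thin (P.face i α w) := by
    intro i α hne
    rcases Nat.lt_trichotomy (i : ℕ) (k : ℕ) with hik | hik | hik
    · rw [hG.2.2.1 n k.castSucc i α _ _ hmw hik]
      exact hG.1 n _ _ _ (match_lo hmw hik α (by omega) (by omega))
    · have hik' : i = (k.castSucc).castSucc := Fin.ext hik
      subst hik'
      cases α
      · exact absurd rfl hne
      · rw [(hG.2.1 (n + 1) k.castSucc _ _ hmw).1]
        exact hΓ.1 n k false x
    · rcases Nat.lt_or_ge ((k : ℕ) + 1) (i : ℕ) with hik2 | hik2
      · rw [hG.2.2.2 n k.castSucc i α _ _ hmw hik2]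
        exact hG.1 n _ _ _ (match_hi hmw (by omega) α (by have := i.isLt; omega)
          (by omega))
      · have hik' : i = (k.castSucc).succ := Fin.ext (by simp [Fin.val_succ]; omega)
        subst hik'
        cases α
        · rw [(hG.2.1 (n + 1) k.castSucc _ _ hmw).2.1]
          exact hΓ.1 n k true x
        · rw [(hG.2.1 (n + 1) k.castSucc _ _ hmw).2.2]
          exact hE.1 (n + 1) k.castSucc _
  have hw' : P.thin (P.face (k.castSucc).castSucc false w) :=
    hP.2.2 (n + 2) (k.castSucc).castSucc false _ w hbox hthinw (fun i α _ => rfl) hent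
  obtain ⟨z, hz, huniq⟩ := hP.2.1 (n + 1) _ (admShell_E (E := E) hE k.succ x)
  have eE : E (n + 1) k.succ x = z := huniq _ ⟨hE.1 _ _ _, fun i α => rfl⟩
  have eW : P.face (k.castSucc).castSucc false w = z := by
    refine huniq _ ⟨hw', ?_⟩
    intro i α
    show P.face i α (P.face (k.castSucc).castSucc false w)
        = P.face i α (E (n + 1) k.succ x)
    rcases Nat.lt_trichotomy (i : ℕ) (k : ℕ) with hik | hik | hik
    · -- i < k
      obtain ⟨n', rfl⟩ : ∃ n', n = n' + 1 := ⟨n - 1, by omega⟩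
      have h0 : P.face i α (P.face (k.castSucc).castSucc false w)
          = P.face (⟨(k : ℕ) - 1, by omega⟩ : Fin (n' + 3)) false
              (P.face (⟨(i : ℕ), by have := i.isLt; omega⟩ : Fin (n' + 4)) α w) := by
        have h1 := frel (P := P) w (a := (i : ℕ)) (b := (k : ℕ) - 1) (by omega)
          (by have := i.isLt; omega) (by omega) (by omega) α false
        rw [show (⟨(k : ℕ) - 1 + 1, by omega⟩ : Fin (n' + 4))
          = (k.castSucc).castSucc from Fin.ext (by simp; omega)] at h1
        exact h1.symm
      rw [h0]
      rw [hG.2.2.1 (n' + 1) k.castSucc ⟨(i : ℕ), by have := i.isLt; omega⟩ α _ _ hmw hik]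
      rw [hΓ.2.2.2.1 n' k true ⟨(i : ℕ), by have := i.isLt; omega⟩ α x hik]
      rw [hΓ.2.2.2.1 n' k false ⟨(i : ℕ), by have := i.isLt; omega⟩ α x hik]
      have hI' :
          P.face (⟨(k : ℕ) - 1, by omega⟩ : Fin (n' + 3)) false
              (G (n' + 1) ⟨((k.castSucc : Fin (n' + 3)) : ℕ) - 1, by omega⟩
                (Γ n' ⟨(k : ℕ) - 1, by omega⟩ true
                  (P.face ⟨((⟨(i : ℕ), by have := i.isLt; omega⟩ : Fin (n' + 3)) : ℕ),
                    (by omega : (i : ℕ) < n' + 2)⟩ α x))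
                (Γ n' ⟨(k : ℕ) - 1, by omega⟩ false
                  (P.face ⟨((⟨(i : ℕ), by have := i.isLt; omega⟩ : Fin (n' + 3)) : ℕ),
                    (by omega : (i : ℕ) < n' + 2)⟩ α x)))
            = E (n' + 1) (⟨(k : ℕ) - 1, by omega⟩ : Fin (n' + 1)).succ
                (P.face ⟨(i : ℕ), by have := i.isLt; omega⟩ α x) :=
        ih n' (by omega) ⟨(k : ℕ) - 1, by omega⟩
          (P.face ⟨(i : ℕ), by have := i.isLt; omega⟩ α x)
      rw [hI']
      rw [hE.2.2.1 (n' + 1) k.succ i α x (by omega)]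
      congr 1
      exact Fin.ext (by simp [Fin.val_succ]; omega)
    · -- i = k
      have hik' : i = k.castSucc := Fin.ext hik
      subst hik'
      have h0 : P.face k.castSucc α (P.face (k.castSucc).castSucc false w)
          = P.face (⟨(k : ℕ), by omega⟩ : Fin (n + 2)) false
              (P.face (⟨(k : ℕ) + 1, by omega⟩ : Fin (n + 3)) α w) := by
        exact frel (P := P) w (a := (k : ℕ)) (b := (k : ℕ)) (le_refl _)
          (by omega) (by omega) (by omega) false α
      rw [h0]
      have hsucc : (⟨(k : ℕ) + 1, by omega⟩ : Fin (n + 3))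
          = (k.castSucc).succ := Fin.ext (by simp [Fin.val_succ])
      rw [hsucc]
      cases α
      · rw [(hG.2.1 (n + 1) k.castSucc _ _ hmw).2.1]
        have h2 : P.face (⟨(k : ℕ), by omega⟩ : Fin (n + 2)) false
            (Γ n k true x) = E n k (P.face k false x) := (hΓ.2.2.1 n k true x).1
        rw [h2]
        rw [hE.2.2.1 n k.succ k.castSucc false x (by omega)]
        rfl
      · rw [(hG.2.1 (n + 1) k.castSucc _ _ hmw).2.2]
        have h2 : P.face k.castSucc true (Γ n k false x) = E n k (P.face k true x) :=
          (hΓ.2.2.1 n k false x).1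
        rw [h2]
        have h3 : P.face (⟨(k : ℕ), by omega⟩ : Fin (n + 2)) false
            (E (n + 1) k.castSucc (E n k (P.face k true x))) = E n k (P.face k true x) :=
          hE.2.1 (n + 1) k.castSucc false _
        rw [h3]
        rw [hE.2.2.1 n k.succ k.castSucc true x (by omega)]
        rfl
    · rcases Nat.lt_or_ge ((k : ℕ) + 1) (i : ℕ) with hik2 | hik2
      · -- i > k + 1
        obtain ⟨n', rfl⟩ : ∃ n', n = n' + 1 := ⟨n - 1, by have := i.isLt; omega⟩
        have h0 : P.face i α (P.face (k.castSucc).castSucc false w)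
            = P.face (⟨(k : ℕ), by omega⟩ : Fin (n' + 3)) false
                (P.face (⟨(i : ℕ) + 1, by have := i.isLt; omega⟩ : Fin (n' + 4)) α w) := by
          exact frel (P := P) w (a := (k : ℕ)) (b := (i : ℕ)) (by omega)
            (by omega) (by have := i.isLt; omega) (by have := i.isLt; omega) false α
        rw [h0]
        rw [hG.2.2.2 (n' + 1) k.castSucc ⟨(i : ℕ) + 1, by have := i.isLt; omega⟩ α _ _ hmw
          (by simp; omega)]
        rw [hΓ.2.2.2.2 n' k true ⟨(i : ℕ) + 1 - 1, by have := i.isLt; omega⟩ α x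
          (by simp; omega)]
        rw [hΓ.2.2.2.2 n' k false ⟨(i : ℕ) + 1 - 1, by have := i.isLt; omega⟩ α x
          (by simp; omega)]
        have hI' :
            P.face (⟨(k : ℕ), by omega⟩ : Fin (n' + 3)) false
                (G (n' + 1) ⟨((k.castSucc : Fin (n' + 3)) : ℕ), by omega⟩
                  (Γ n' ⟨(k : ℕ), by omega⟩ true
                    (P.face ⟨((⟨(i : ℕ) + 1 - 1, by have := i.isLt; omega⟩ :
                        Fin (n' + 3)) : ℕ) - 1,
                      (by have := i.isLt; omega : (i : ℕ) + 1 - 1 - 1 < n' + 2)⟩ α x))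
                  (Γ n' ⟨(k : ℕ), by omega⟩ false
                    (P.face ⟨((⟨(i : ℕ) + 1 - 1, by have := i.isLt; omega⟩ :
                        Fin (n' + 3)) : ℕ) - 1,
                      (by have := i.isLt; omega : (i : ℕ) + 1 - 1 - 1 < n' + 2)⟩ α x)))
              = E (n' + 1) (⟨(k : ℕ), by omega⟩ : Fin (n' + 1)).succ
                  (P.face ⟨(i : ℕ) + 1 - 1 - 1, by have := i.isLt; omega⟩ α x) :=
          ih n' (by omega) ⟨(k : ℕ), by omega⟩
            (P.face ⟨(i : ℕ) + 1 - 1 - 1, by have := i.isLt; omega⟩ α x)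
        rw [hI']
        rw [hE.2.2.2 (n' + 1) k.succ i α x (by omega)]
        congr 1
      · -- i = k + 1
        have hik' : i = k.succ := Fin.ext (by simp [Fin.val_succ]; omega)
        subst hik'
        have h0 : P.face k.succ α (P.face (k.castSucc).castSucc false w)
            = P.face (⟨(k : ℕ), by omega⟩ : Fin (n + 2)) false
                (P.face (⟨(k : ℕ) + 2, by omega⟩ : Fin (n + 3)) α w) := by
          exact frel (P := P) w (a := (k : ℕ)) (b := (k : ℕ) + 1) (by omega)
            (by omega) (by omega) (by omega) false α
        rw [h0]
        rw [hG.2.2.2 n k.castSucc ⟨(k : ℕ) + 2, by omega⟩ α _ _ hmw (by simp)]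
        have hsucc : (⟨(k : ℕ) + 2 - 1, by omega⟩ : Fin (n + 2))
            = k.succ := Fin.ext (by simp [Fin.val_succ])
        rw [hsucc]
        cases α
        · have hA : P.face k.succ false (Γ n k true x) = E n k (P.face k false x) :=
            (hΓ.2.2.1 n k true x).2
          have hB : P.face k.succ false (Γ n k false x) = x := (hΓ.2.1 n k false x).2
          have h5 : G n (⟨((k.castSucc : Fin (n + 2)) : ℕ), by omega⟩ : Fin (n + 1))
              (E n k (P.face k false x)) x = E (n + 1) k.castSucc x :=
            S1 (E := E) (G := G) hP hE hG n k x
          rw [hA, hB, h5]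
          exact (hE.2.1 (n + 1) k.castSucc false x).trans
            (hE.2.1 (n + 1) k.succ false x).symm
        · have hA : P.face k.succ true (Γ n k true x) = x := (hΓ.2.1 n k true x).2
          have hB : P.face k.succ true (Γ n k false x) = E n k (P.face k true x) :=
            (hΓ.2.2.1 n k false x).2
          have h5 : G n (⟨((k.castSucc : Fin (n + 2)) : ℕ), by omega⟩ : Fin (n + 1)) x
              (E n k (P.face k true x)) = Γ n k false x :=
            S2 (E := E) (Γ := Γ) (G := G) hP hE hΓ hG n k x
          rw [hA, hB, h5]
          exact ((hΓ.2.1 n k false x).1).trans (hE.2.1 (n + 1) k.succ true x).symm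
  exact eW.trans eE.symm

end Aux8

section Aux9

variable {P : SPS}
variable {E : ∀ n : ℕ, Fin (n + 1) → P.X n → P.X (n + 1)}
variable {Γ : ∀ n : ℕ, Fin (n + 1) → Bool → P.X (n + 1) → P.X (n + 2)}
variable {G : ∀ n : ℕ, Fin (n + 1) → P.X (n + 1) → P.X (n + 1) → P.X (n + 2)}

lemma S4 (hP : P.IsComplete) (hE : P.IsDegSys E) (hΓ : P.IsConnSys E Γ)
    (hG : P.IsCompSys E G) :
    ∀ n : ℕ, ∀ (k : Fin (n + 1)) (x : P.X (n + 1)),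
      P.face (k.succ).castSucc false
          (G (n + 1) k.succ (Γ n k true x) (Γ n k false x))
        = E (n + 1) k.castSucc x := by
  intro n
  induction n using Nat.strong_induction_on with
  | _ n ih =>
  intro k x
  have hkn := k.isLt
  have hv1 : ((k.castSucc : Fin (n + 2)) : ℕ) = (k : ℕ) := rfl
  have hv3 : ((k.succ : Fin (n + 2)) : ℕ) = (k : ℕ) + 1 := rfl
  have hv4 : (((k.succ).castSucc : Fin (n + 3)) : ℕ) = (k : ℕ) + 1 := rfl
  have hv5 : (((k.succ).succ : Fin (n + 3)) : ℕ) = (k : ℕ) + 2 := rfl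
  have hmw : P.face k.succ true (Γ n k true x)
      = P.face k.succ false (Γ n k false x) := by
    rw [(hΓ.2.1 n k true x).2, (hΓ.2.1 n k false x).2]
  set w := G (n + 1) k.succ (Γ n k true x) (Γ n k false x) with hw
  have hthinw : P.thin w := hG.1 (n + 1) k.succ _ _ hmw
  have hbox := admBox_G (E := E) hE hG k.succ (Γ n k true x) (Γ n k false x) hmw
  have hent : ∀ (i : Fin (n + 3)) (α : Bool),
      ((i, α) : Fin (n + 3) × Bool) ≠ ((k.succ).castSucc, false) →
      P.thin (P.face i α w) := by
    intro i α hne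
    rcases Nat.lt_trichotomy (i : ℕ) ((k : ℕ) + 1) with hik | hik | hik
    · rw [hG.2.2.1 n k.succ i α _ _ hmw hik]
      exact hG.1 n _ _ _ (match_lo hmw hik α (by have := i.isLt; omega) (by omega))
    · have hik' : i = (k.succ).castSucc := Fin.ext hik
      subst hik'
      cases α
      · exact absurd rfl hne
      · rw [(hG.2.1 (n + 1) k.succ _ _ hmw).1]
        exact hΓ.1 n k false x
    · rcases Nat.lt_or_ge ((k : ℕ) + 2) (i : ℕ) with hik2 | hik2
      · rw [hG.2.2.2 n k.succ i α _ _ hmw hik2]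
        exact hG.1 n _ _ _ (match_hi hmw (by omega) α (by have := i.isLt; omega)
          (by omega))
      · have hik' : i = (k.succ).succ := Fin.ext (by simp only [Fin.val_succ, Fin.coe_castSucc, Fin.val_mk] <;> omega)
        subst hik'
        cases α
        · rw [(hG.2.1 (n + 1) k.succ _ _ hmw).2.1]
          exact hΓ.1 n k true x
        · rw [(hG.2.1 (n + 1) k.succ _ _ hmw).2.2]
          exact hE.1 (n + 1) k.succ _
  have hw' : P.thin (P.face (k.succ).castSucc false w) :=
    hP.2.2 (n + 2) (k.succ).castSucc false _ w hbox hthinw (fun i α _ => rfl) hent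
  obtain ⟨z, hz, huniq⟩ := hP.2.1 (n + 1) _ (admShell_E (E := E) hE k.castSucc x)
  have eE : E (n + 1) k.castSucc x = z := huniq _ ⟨hE.1 _ _ _, fun i α => rfl⟩
  have eW : P.face (k.succ).castSucc false w = z := by
    refine huniq _ ⟨hw', ?_⟩
    intro i α
    show P.face i α (P.face (k.succ).castSucc false w)
        = P.face i α (E (n + 1) k.castSucc x)
    rcases Nat.lt_trichotomy (i : ℕ) (k : ℕ) with hik | hik | hik
    · -- i < k
      obtain ⟨n', rfl⟩ : ∃ n', n = n' + 1 := ⟨n - 1, by omega⟩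
      have h0 : P.face i α (P.face (k.succ).castSucc false w)
          = P.face (⟨(k : ℕ), by omega⟩ : Fin (n' + 3)) false
              (P.face (⟨(i : ℕ), by have := i.isLt; omega⟩ : Fin (n' + 4)) α w) := by
        have h1 := frel (P := P) w (a := (i : ℕ)) (b := (k : ℕ)) (by omega)
          (by have := i.isLt; omega) (by omega) (by omega) α false
        rw [show (⟨(k : ℕ) + 1, by omega⟩ : Fin (n' + 4))
          = (k.succ).castSucc from Fin.ext (by simp only [Fin.val_succ, Fin.coe_castSucc, Fin.val_mk] <;> omega)] at h1
        exact h1.symm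
      rw [h0]
      rw [hG.2.2.1 (n' + 1) k.succ ⟨(i : ℕ), by have := i.isLt; omega⟩ α _ _ hmw
        (by omega : (i : ℕ) < (k : ℕ) + 1)]
      rw [hΓ.2.2.2.1 n' k true ⟨(i : ℕ), by have := i.isLt; omega⟩ α x hik]
      rw [hΓ.2.2.2.1 n' k false ⟨(i : ℕ), by have := i.isLt; omega⟩ α x hik]
      rw [show (⟨((k.succ : Fin (n' + 3)) : ℕ) - 1, by omega⟩ : Fin (n' + 2))
        = (⟨(k : ℕ) - 1, by omega⟩ : Fin (n' + 1)).succ from Fin.ext (by simp only [Fin.val_succ, Fin.coe_castSucc, Fin.val_mk] <;> omega)]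
      rw [show (⟨(k : ℕ), by omega⟩ : Fin (n' + 3))
        = ((⟨(k : ℕ) - 1, by omega⟩ : Fin (n' + 1)).succ).castSucc
        from Fin.ext (by simp only [Fin.val_succ, Fin.coe_castSucc, Fin.val_mk] <;> omega)]
      rw [ih n' (by omega) ⟨(k : ℕ) - 1, by omega⟩
        (P.face ⟨(i : ℕ), (by omega : (i : ℕ) < n' + 2)⟩ α x)]
      rw [hE.2.2.1 (n' + 1) k.castSucc i α x (show (i : ℕ) < ((k.castSucc :
        Fin (n' + 3)) : ℕ) from hik)]
      congr 1 <;> exact Fin.ext (by simp only [Fin.val_succ, Fin.coe_castSucc, Fin.val_mk] <;> omega)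
    · -- i = k
      have hik' : i = k.castSucc := Fin.ext hik
      subst hik'
      have h0 : P.face k.castSucc α (P.face (k.succ).castSucc false w)
          = P.face (⟨(k : ℕ), by omega⟩ : Fin (n + 2)) false
              (P.face (⟨(k : ℕ), by omega⟩ : Fin (n + 3)) α w) := by
        have h1 := frel (P := P) w (a := (k : ℕ)) (b := (k : ℕ)) (le_refl _)
          (by omega) (by omega) (by omega) α false
        rw [show (⟨(k : ℕ) + 1, by omega⟩ : Fin (n + 3))
          = (k.succ).castSucc from Fin.ext (by simp only [Fin.val_succ, Fin.coe_castSucc, Fin.val_mk] <;> omega)] at h1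
        exact h1.symm
      rw [h0]
      rw [hG.2.2.1 n k.succ ⟨(k : ℕ), by omega⟩ α _ _ hmw
        (by omega : (k : ℕ) < (k : ℕ) + 1)]
      cases α
      · have hA : P.face (⟨((⟨(k : ℕ), by omega⟩ : Fin (n + 3)) : ℕ),
            (by omega : (k : ℕ) < n + 2)⟩ : Fin (n + 2)) false (Γ n k true x)
            = E n k (P.face k false x) := (hΓ.2.2.1 n k true x).1
        have hB : P.face (⟨((⟨(k : ℕ), by omega⟩ : Fin (n + 3)) : ℕ),
            (by omega : (k : ℕ) < n + 2)⟩ : Fin (n + 2)) false (Γ n k false x) = x :=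
          (hΓ.2.1 n k false x).1
        rw [hA, hB]
        have h5 : G n (⟨((k.succ : Fin (n + 2)) : ℕ) - 1, by omega⟩ : Fin (n + 1))
            (E n k (P.face k false x)) x = E (n + 1) k.castSucc x :=
          S1 (E := E) (G := G) hP hE hG n k x
        rw [h5]
        exact (hE.2.1 (n + 1) k.castSucc false x).trans
          (hE.2.1 (n + 1) k.castSucc false x).symm
      · have hA : P.face (⟨((⟨(k : ℕ), by omega⟩ : Fin (n + 3)) : ℕ),
            (by omega : (k : ℕ) < n + 2)⟩ : Fin (n + 2)) true (Γ n k true x) = x :=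
          (hΓ.2.1 n k true x).1
        have hB : P.face (⟨((⟨(k : ℕ), by omega⟩ : Fin (n + 3)) : ℕ),
            (by omega : (k : ℕ) < n + 2)⟩ : Fin (n + 2)) true (Γ n k false x)
            = E n k (P.face k true x) := (hΓ.2.2.1 n k false x).1
        rw [hA, hB]
        have h5 : G n (⟨((k.succ : Fin (n + 2)) : ℕ) - 1, by omega⟩ : Fin (n + 1)) x
            (E n k (P.face k true x)) = Γ n k false x :=
          S2 (E := E) (Γ := Γ) (G := G) hP hE hΓ hG n k x
        rw [h5]
        exact ((hΓ.2.1 n k false x).1).trans (hE.2.1 (n + 1) k.castSucc true x).symm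
    · rcases Nat.lt_or_ge ((k : ℕ) + 1) (i : ℕ) with hik2 | hik2
      · -- i > k + 1
        obtain ⟨n', rfl⟩ : ∃ n', n = n' + 1 := ⟨n - 1, by have := i.isLt; omega⟩
        have h0 : P.face i α (P.face (k.succ).castSucc false w)
            = P.face (⟨(k : ℕ) + 1, by omega⟩ : Fin (n' + 3)) false
                (P.face (⟨(i : ℕ) + 1, by have := i.isLt; omega⟩ : Fin (n' + 4)) α w) := by
          exact frel (P := P) w (a := (k : ℕ) + 1) (b := (i : ℕ)) (by omega)
            (by omega) (by have := i.isLt; omega) (by have := i.isLt; omega) false α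
        rw [h0]
        rw [hG.2.2.2 (n' + 1) k.succ ⟨(i : ℕ) + 1, by have := i.isLt; omega⟩ α _ _ hmw
          (by simp only [Fin.val_succ] <;> omega : ((k.succ : Fin (n' + 3)) : ℕ) + 1 < (i : ℕ) + 1)]
        rw [hΓ.2.2.2.2 n' k true ⟨(i : ℕ) + 1 - 1, by have := i.isLt; omega⟩ α x
          (by omega : (k : ℕ) + 1 < (i : ℕ) + 1 - 1)]
        rw [hΓ.2.2.2.2 n' k false ⟨(i : ℕ) + 1 - 1, by have := i.isLt; omega⟩ α x
          (by omega : (k : ℕ) + 1 < (i : ℕ) + 1 - 1)]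
        have hI' :
            P.face (⟨(k : ℕ) + 1, by omega⟩ : Fin (n' + 3)) false
                (G (n' + 1) ⟨((k.succ : Fin (n' + 3)) : ℕ), by omega⟩
                  (Γ n' ⟨(k : ℕ), by omega⟩ true
                    (P.face ⟨((⟨(i : ℕ) + 1 - 1, by have := i.isLt; omega⟩ :
                        Fin (n' + 3)) : ℕ) - 1,
                      (by have := i.isLt; omega : (i : ℕ) + 1 - 1 - 1 < n' + 2)⟩ α x))
                  (Γ n' ⟨(k : ℕ), by omega⟩ false
                    (P.face ⟨((⟨(i : ℕ) + 1 - 1, by have := i.isLt; omega⟩ :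
                        Fin (n' + 3)) : ℕ) - 1,
                      (by have := i.isLt; omega : (i : ℕ) + 1 - 1 - 1 < n' + 2)⟩ α x)))
              = E (n' + 1) (⟨(k : ℕ), by omega⟩ : Fin (n' + 1)).castSucc
                  (P.face ⟨(i : ℕ) + 1 - 1 - 1, by have := i.isLt; omega⟩ α x) :=
          ih n' (by omega) ⟨(k : ℕ), by omega⟩
            (P.face ⟨(i : ℕ) + 1 - 1 - 1, by have := i.isLt; omega⟩ α x)
        rw [hI']
        rw [hE.2.2.2 (n' + 1) k.castSucc i α x
          (by simp only [Fin.coe_castSucc] <;> omega : ((k.castSucc : Fin (n' + 3)) : ℕ) < (i : ℕ))]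
        congr 1
      · -- i = k + 1
        have hik' : i = k.succ := Fin.ext (by simp only [Fin.val_succ, Fin.coe_castSucc, Fin.val_mk] <;> omega)
        subst hik'
        have h0 : P.face k.succ α (P.face (k.succ).castSucc false w)
            = P.face (⟨(k : ℕ) + 1, by omega⟩ : Fin (n + 2)) false
                (P.face (⟨(k : ℕ) + 2, by omega⟩ : Fin (n + 3)) α w) := by
          exact frel (P := P) w (a := (k : ℕ) + 1) (b := (k : ℕ) + 1) (le_refl _)
            (by omega) (by omega) (by omega) false α
        rw [h0]
        rw [show (⟨(k : ℕ) + 2, by omega⟩ : Fin (n + 3)) = (k.succ).succ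
          from Fin.ext (by simp only [Fin.val_succ, Fin.coe_castSucc, Fin.val_mk] <;> omega)]
        cases α
        · rw [(hG.2.1 (n + 1) k.succ _ _ hmw).2.1]
          have hA : P.face (⟨(k : ℕ) + 1, by omega⟩ : Fin (n + 2)) false (Γ n k true x)
              = E n k (P.face k false x) := (hΓ.2.2.1 n k true x).2
          rw [hA]
          exact Eq.trans (by rfl)
            (hE.2.2.2 n k.castSucc k.succ false x (by simp only [Fin.val_succ, Fin.coe_castSucc] <;> omega : ((k.castSucc :
              Fin (n + 2)) : ℕ) < ((k.succ : Fin (n + 2)) : ℕ))).symm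
        · rw [(hG.2.1 (n + 1) k.succ _ _ hmw).2.2]
          have hA : P.face (⟨(k : ℕ) + 1, by omega⟩ : Fin (n + 2)) false
              (E (n + 1) k.succ (P.face k.succ true (Γ n k false x)))
              = P.face k.succ true (Γ n k false x) := hE.2.1 (n + 1) k.succ false _
          rw [hA]
          have hB : P.face k.succ true (Γ n k false x) = E n k (P.face k true x) :=
            (hΓ.2.2.1 n k false x).2
          rw [hB]
          exact Eq.trans (by rfl)
            (hE.2.2.2 n k.castSucc k.succ true x (by simp only [Fin.val_succ, Fin.coe_castSucc] <;> omega : ((k.castSucc :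
              Fin (n + 2)) : ℕ) < ((k.succ : Fin (n + 2)) : ℕ))).symm
  exact eW.trans eE.symm

end Aux9


/-- in a complete stratified precubical set the composites, degeneracies
and connections satisfy `ε_k ∂_k^− x ∘_k x = x = x ∘_k ε_k ∂_k^+ x`,
`Γ_k^+ x ∘_k Γ_k^− x = ε_{k+1} x`, and `Γ_k^+ x ∘_{k+1} Γ_k^− x = ε_k x`. -/
theorem composite_units_and_connections (P : SPS) (hP : P.IsComplete)
    (E : ∀ n : ℕ, Fin (n + 1) → P.X n → P.X (n + 1)) (hE : P.IsDegSys E)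
    (Γ : ∀ n : ℕ, Fin (n + 1) → Bool → P.X (n + 1) → P.X (n + 2))
    (hΓ : P.IsConnSys E Γ)
    (G : ∀ n : ℕ, Fin (n + 1) → P.X (n + 1) → P.X (n + 1) → P.X (n + 2))
    (hG : P.IsCompSys E G) :
    (∀ (n : ℕ) (k : Fin (n + 1)) (x : P.X (n + 1)),
      P.cmp G k (E n k (P.face k false x)) x = x) ∧
    (∀ (n : ℕ) (k : Fin (n + 1)) (x : P.X (n + 1)),
      P.cmp G k x (E n k (P.face k true x)) = x) ∧
    (∀ (n : ℕ) (k : Fin (n + 1)) (x : P.X (n + 1)),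
      P.cmp G k.castSucc (Γ n k true x) (Γ n k false x) = E (n + 1) k.succ x) ∧
    (∀ (n : ℕ) (k : Fin (n + 1)) (x : P.X (n + 1)),
      P.cmp G k.succ (Γ n k true x) (Γ n k false x) = E (n + 1) k.castSucc x) := by
  refine ⟨fun n k x => ?_, fun n k x => ?_, fun n k x => ?_, fun n k x => ?_⟩
  · show P.face k.castSucc false (G n k (E n k (P.face k false x)) x) = x
    rw [S1 (E := E) (G := G) hP hE hG n k x]
    exact hE.2.1 (n + 1) k.castSucc false x
  · show P.face k.castSucc false (G n k x (E n k (P.face k true x))) = x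
    rw [S2 (E := E) (Γ := Γ) (G := G) hP hE hΓ hG n k x]
    exact (hΓ.2.1 n k false x).1
  · exact S3 (E := E) (Γ := Γ) (G := G) hP hE hΓ hG n k x
  · exact S4 (E := E) (Γ := Γ) (G := G) hP hE hΓ hG n k x

end CubicalNerve
end

section
/- In a complete stratified precubical set, if k ≠ l then (x ∘_k y) ∘_l (z ∘_k w) = (x ∘_l z) ∘_k (y ∘_l w) whenever both sides are defined. -/
namespace CubicalNerve

/-! ### Auxiliary machinery for the interchange proof -/

section InterchangeAux

variable (P : SPS)

/-- Iterated faces on a dimension-bundled cube; the head of the list is applied first. -/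
def cf : List (ℕ × Bool) → (Σ n, P.X n) → (Σ n, P.X n)
  | [], s => s
  | p :: L, s => cf L ⟨s.1 - 1, P.faceN p.1 p.2 s.2⟩

lemma cf_append (L₁ L₂ : List (ℕ × Bool)) (s : Σ n, P.X n) :
    cf P (L₁ ++ L₂) s = cf P L₂ (cf P L₁ s) := by
  induction L₁ generalizing s with
  | nil => rfl
  | cons p L ih => simp [cf, ih]

lemma apBox_eq_cf {m : ℕ} (S : P.X (m + 1)) (b : Fin (m + 1) → Bool → P.X m)
    (hb : ∀ i α, b i α = P.face i α S) (p : ℕ × Bool) (L : List (ℕ × Bool)) :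
    (⟨m - L.length, P.apBoxAux b p L⟩ : Σ n, P.X n) = cf P ((p :: L).reverse) ⟨m + 1, S⟩ := by
  induction L generalizing p with
  | nil => simp [cf, SPS.apBoxAux, SPS.faceN, hb]
  | cons q L ih =>
    have h : (p :: q :: L).reverse = (q :: L).reverse ++ [p] := by simp
    rw [h, cf_append, ← ih q]
    rfl

lemma thin_apBox_eq {m : ℕ} (S : P.X (m + 1)) (b : Fin (m + 1) → Bool → P.X m)
    (hb : ∀ i α, b i α = P.face i α S) (p : ℕ × Bool) (L : List (ℕ × Bool)) :
    P.thin (P.apBoxAux b p L) = P.thin ((cf P ((p :: L).reverse) ⟨m + 1, S⟩).2) :=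
  congrArg (fun s : Σ n, P.X n => P.thin s.2) (apBox_eq_cf P S b hb p L)

lemma insSorted_append_le (a q : ℕ × Bool) (M : List (ℕ × Bool)) (h : a.1 ≤ q.1) :
    insSorted a (M ++ [q]) = insSorted a M ++ [q] := by
  induction M with
  | nil => simp [insSorted, h]
  | cons p M ih => by_cases hp : a.1 ≤ p.1 <;> simp [insSorted, hp, ih]

lemma insSorted_all_lt (a : ℕ × Bool) (M : List (ℕ × Bool)) (h : ∀ p ∈ M, p.1 < a.1) :
    insSorted a M = M ++ [a] := by
  induction M with
  | nil => rfl
  | cons p M ih =>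
    have hp : ¬ a.1 ≤ p.1 := by have := h p (by simp); omega
    simp only [insSorted, hp, if_false, List.cons_append, List.cons.injEq, true_and]
    exact ih (fun r hr => h r (by simp [hr]))

lemma getElem_mid2 (M : List (ℕ × Bool)) (a b : ℕ × Bool) :
    ((M ++ [a]) ++ [b])[M.length]'(by simp) = a := by
  induction M with
  | nil => rfl
  | cons p M ih => simpa using ih

lemma getElem_last2 (M : List (ℕ × Bool)) (a b : ℕ × Bool) :
    ((M ++ [a]) ++ [b])[M.length + 1]'(by simp) = b := by
  induction M with
  | nil => rfl
  | cons p M ih => simpa using ih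

lemma getElem_last1 (M : List (ℕ × Bool)) (a : ℕ × Bool) :
    (M ++ [a])[M.length]'(by simp) = a := by
  induction M with
  | nil => rfl
  | cons p M ih => simpa using ih

lemma constSign_dropLast {M : List (ℕ × Bool)} {q : ℕ × Bool}
    (h : ConstSign (M ++ [q])) : ConstSign M := by
  obtain ⟨e, he⟩ := h
  refine ⟨e, fun t ht => ?_⟩
  have h2 := he t (by simp; omega)
  have e1 : (M ++ [q]).get ⟨t, by simp; omega⟩ = M.get ⟨t, ht⟩ :=
    List.getElem_append_left ht
  rw [e1] at h2
  exact h2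

lemma negpow_add_two (a : ℕ) : (-1 : ℤ) ^ (a + 2) = (-1) ^ a := by
  rw [pow_add]; norm_num

lemma constSign_shift (M : List (ℕ × Bool)) (q : ℕ × Bool) (lam : ℕ)
    (h : ConstSign ((M ++ [q]) ++ [(lam + 1, true)])) : ConstSign (M ++ [(lam, true)]) := by
  obtain ⟨e, he⟩ := h
  refine ⟨e, fun t ht => ?_⟩
  simp only [List.length_append, List.length_singleton] at ht
  rcases Nat.lt_or_ge t M.length with h1 | h1
  · have h2 := he t (by simp; omega)
    have e1 : ((M ++ [q]) ++ [(lam + 1, true)]).get ⟨t, by simp; omega⟩ = M.get ⟨t, h1⟩ := by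
      rw [List.get_eq_getElem,
        List.getElem_append_left (show t < (M ++ [q]).length by simp; omega)]
      exact List.getElem_append_left h1
    have e2 : (M ++ [(lam, true)]).get ⟨t, by simp; omega⟩ = M.get ⟨t, h1⟩ :=
      List.getElem_append_left h1
    rw [e2, ← e1]
    exact h2
  · have h2 : t = M.length := by omega
    subst h2
    have h3 := he (M.length + 1) (by simp)
    have e1 : ((M ++ [q]) ++ [(lam + 1, true)]).get ⟨M.length + 1, by simp⟩
        = (lam + 1, true) := getElem_last2 M q _
    have e2 : (M ++ [(lam, true)]).get ⟨M.length, by simp⟩ = (lam, true) := getElem_last1 M _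
    rw [e2]
    rw [e1] at h3
    simp only [sgn, if_true] at h3 ⊢
    rw [show lam + 1 + (M.length + 1) + 1 = (lam + M.length + 1) + 2 by omega] at h3
    rw [negpow_add_two] at h3
    exact h3

lemma constSign_top_sign (M : List (ℕ × Bool)) (α : Bool) (lam : ℕ)
    (h : ConstSign ((M ++ [(lam + 1, true)]) ++ [(lam + 2, α)])) : α = true := by
  obtain ⟨e, he⟩ := h
  have h1 := he M.length (by simp)
  have h2 := he (M.length + 1) (by simp)
  have e1 : ((M ++ [(lam + 1, true)]) ++ [(lam + 2, α)]).get ⟨M.length, by simp⟩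
      = (lam + 1, true) := getElem_mid2 M _ _
  have e2 : ((M ++ [(lam + 1, true)]) ++ [(lam + 2, α)]).get ⟨M.length + 1, by simp⟩
      = (lam + 2, α) := getElem_last2 M _ _
  rw [e1] at h1
  rw [e2] at h2
  rw [← h2] at h1
  rw [show lam + 2 + (M.length + 1) + 1 = (lam + 1 + M.length + 1) + 2 by omega,
    negpow_add_two] at h1
  simp only [sgn, if_true] at h1
  have hne : ((-1 : ℤ)) ^ (lam + 1 + M.length + 1) ≠ 0 := pow_ne_zero _ (by norm_num)
  have h4 := (mul_left_cancel₀ hne h1).symm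
  cases α with
  | true => rfl
  | false => simp at h4


lemma faceN_eq_s17 {n : ℕ} (i : ℕ) (α : Bool) (x : P.X (n + 1)) (h2 : i ≤ n + 1) :
    P.faceN i α x = P.face ⟨i - 1, by omega⟩ α x := by
  show P.face ⟨min (i - 1) n, Nat.lt_succ_of_le (Nat.min_le_right _ _)⟩ α x = _
  rw [show (⟨min (i - 1) n, Nat.lt_succ_of_le (Nat.min_le_right _ _)⟩ : Fin (n + 1))
      = (⟨i - 1, by omega⟩ : Fin (n + 1)) from Fin.ext (by simp; omega)]

lemma fswap_low {N : ℕ} (X : P.X (N + 2)) (i j : ℕ) (α β : Bool) (hji : j ≤ i) (hi : i < N + 1) :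
    P.face ⟨i, by omega⟩ α (P.face ⟨j, by omega⟩ β X)
      = P.face ⟨j, by omega⟩ β (P.face ⟨i + 1, by omega⟩ α X) :=
  P.face_rel ⟨j, by omega⟩ ⟨i, hi⟩ hji α β X

lemma fswap_high {N : ℕ} (X : P.X (N + 2)) (i j : ℕ) (α β : Bool) (hji : j < i) (hi : i < N + 2) :
    P.face ⟨j, by omega⟩ β (P.face ⟨i, hi⟩ α X)
      = P.face ⟨i - 1, by omega⟩ α (P.face ⟨j, by omega⟩ β X) := by
  have h := (P.face_rel (⟨j, by omega⟩ : Fin (N + 2)) (⟨i - 1, by omega⟩ : Fin (N + 1))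
    (show j ≤ i - 1 by omega) α β X).symm
  rw [show (⟨(i : ℕ) - 1 + 1, by omega⟩ : Fin (N + 2)) = ⟨i, hi⟩ from Fin.ext (by simp; omega)] at h
  exact h

variable (E : ∀ n : ℕ, Fin (n + 1) → P.X n → P.X (n + 1))
variable (G : ∀ n : ℕ, Fin (n + 1) → P.X (n + 1) → P.X (n + 1) → P.X (n + 2))

lemma lemA2 (hE : P.IsDegSys E) :
    ∀ (R : List (ℕ × Bool)) (m : ℕ) (k : Fin (m + 1)) (w : P.X m),
      R.Pairwise (fun p q => q.1 < p.1) →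
      (∀ p ∈ R, 1 ≤ p.1 ∧ p.1 ≤ m + 1 ∧ p.1 ≠ (k : ℕ) + 1) →
      P.thin ((cf P R ⟨m + 1, E m k w⟩).2) := by
  intro R
  induction R with
  | nil => intro m k w _ _; exact hE.1 m k w
  | cons q R ih =>
    intro m k w hpw hbd
    obtain ⟨hhead, htail⟩ := List.pairwise_cons.mp hpw
    obtain ⟨hq1, hqm, hqk⟩ := hbd q (by simp)
    show P.thin ((cf P R ⟨m + 1 - 1, P.faceN q.1 q.2 (E m k w)⟩).2)
    rcases Nat.lt_or_ge q.1 ((k : ℕ) + 1) with hlt | hge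
    · -- q.1 ≤ k : face index below the degeneracy
      have hk1 : 1 ≤ (k : ℕ) := by omega
      obtain ⟨m', rfl⟩ : ∃ m', m = m' + 1 := ⟨m - 1, by have := k.isLt; omega⟩
      have hface : P.faceN q.1 q.2 (E (m' + 1) k w)
          = E m' ⟨(k : ℕ) - 1, by have := k.isLt; omega⟩
              (P.face ⟨q.1 - 1, by have := k.isLt; omega⟩ q.2 w) := by
        rw [faceN_eq_s17 P q.1 q.2 _ (by omega)]
        exact hE.2.2.1 m' k ⟨q.1 - 1, by omega⟩ q.2 w (by simpa using by omega)
      rw [hface]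
      exact ih m' _ _ htail (fun p hp => by
        have h1 := hbd p (by simp [hp])
        have h2 := hhead p hp
        refine ⟨h1.1, by omega, by simp; omega⟩)
    · -- q.1 ≥ k + 2 : face index above the degeneracy
      have hq2 : (k : ℕ) + 1 < q.1 := by omega
      obtain ⟨m', rfl⟩ : ∃ m', m = m' + 1 := ⟨m - 1, by omega⟩
      have hface : P.faceN q.1 q.2 (E (m' + 1) k w)
          = E m' ⟨(k : ℕ), by omega⟩
              (P.face ⟨q.1 - 1 - 1, by omega⟩ q.2 w) := by
        rw [faceN_eq_s17 P q.1 q.2 _ (by omega)]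
        exact hE.2.2.2 m' k ⟨q.1 - 1, by omega⟩ q.2 w (by simpa using by omega)
      rw [hface]
      exact ih m' _ _ htail (fun p hp => by
        have h1 := hbd p (by simp [hp])
        have h2 := hhead p hp
        refine ⟨h1.1, by omega, by simp; omega⟩)


lemma lemA (hE : P.IsDegSys E) (hG : P.IsCompSys E G) :
    ∀ (R : List (ℕ × Bool)) (m : ℕ) (l : Fin (m + 1)) (u v : P.X (m + 1))
      (huv : P.face l true u = P.face l false v),
      R.Pairwise (fun p q => q.1 < p.1) →
      (∀ p ∈ R, 1 ≤ p.1 ∧ p.1 ≤ m + 2 ∧ p.1 ≠ (l : ℕ) + 1) →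
      ConstSign (insSorted ((l : ℕ) + 1, true) R.reverse) →
      P.thin ((cf P R ⟨m + 2, G m l u v⟩).2) := by
  intro R
  induction R with
  | nil => intro m l u v huv _ _ _; exact hG.1 m l u v huv
  | cons q R ih =>
    intro m l u v huv hpw hbd hcs
    obtain ⟨hhead, htail⟩ := List.pairwise_cons.mp hpw
    obtain ⟨hq1, hqm, hqk⟩ := hbd q (by simp)
    have hrev : (q :: R).reverse = R.reverse ++ [q] := by simp
    rw [hrev] at hcs
    show P.thin ((cf P R ⟨m + 2 - 1, P.faceN q.1 q.2 (G m l u v)⟩).2)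
    rcases Nat.lt_trichotomy q.1 ((l : ℕ) + 1) with hlt | heq | hgt
    · -- q.1 ≤ l
      have hl1 : 1 ≤ (l : ℕ) := by omega
      obtain ⟨m', rfl⟩ : ∃ m', m = m' + 1 := ⟨m - 1, by have := l.isLt; omega⟩
      have hface : P.faceN q.1 q.2 (G (m' + 1) l u v)
          = G m' ⟨(l : ℕ) - 1, by have := l.isLt; omega⟩
              (P.face ⟨q.1 - 1, by have := l.isLt; omega⟩ q.2 u)
              (P.face ⟨q.1 - 1, by have := l.isLt; omega⟩ q.2 v) := by
        rw [faceN_eq_s17 P q.1 q.2 _ (by omega)]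
        exact hG.2.2.1 m' l ⟨q.1 - 1, by omega⟩ q.2 u v huv (by simpa using by omega)
      rw [hface]
      -- new composability
      have hcomp : P.face (⟨(l : ℕ) - 1, by omega⟩ : Fin (m' + 1)) true
            (P.face ⟨q.1 - 1, by omega⟩ q.2 u)
          = P.face (⟨(l : ℕ) - 1, by omega⟩ : Fin (m' + 1)) false
            (P.face ⟨q.1 - 1, by omega⟩ q.2 v) := by
        rw [fswap_low P u ((l : ℕ) - 1) (q.1 - 1) true q.2 (by omega) (by omega)]
        rw [fswap_low P v ((l : ℕ) - 1) (q.1 - 1) false q.2 (by omega) (by omega)]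
        rw [show (⟨(l : ℕ) - 1 + 1, by omega⟩ : Fin (m' + 2)) = l from Fin.ext (by simp; omega)]
        rw [huv]
      -- constant sign for the tail
      have hall : ∀ p ∈ R.reverse, p.1 < (l : ℕ) + 1 := by
        intro p hp
        have := hhead p (List.mem_reverse.mp hp)
        omega
      rw [insSorted_all_lt _ _ (by
        intro p hp
        rcases List.mem_append.mp hp with h | h
        · exact hall p h
        · simp only [List.mem_singleton] at h
          rw [h]
          omega)] at hcs
      have hcs2 : ConstSign (R.reverse ++ [((l : ℕ) - 1 + 1, true)]) := by
        rw [show (l : ℕ) - 1 + 1 = (l : ℕ) from by omega]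
        exact constSign_shift _ q _ hcs
      refine ih m' _ _ _ hcomp htail (fun p hp => ?_) ?_
      · have h1 := hbd p (by simp [hp])
        have h2 := hhead p hp
        refine ⟨h1.1, by omega, by simp; omega⟩
      · rw [insSorted_all_lt _ _ (by
          intro p hp
          have h2 := hhead p (List.mem_reverse.mp hp)
          show p.1 < (l : ℕ) - 1 + 1
          omega)]
        exact hcs2
    · exact absurd heq hqk
    · rcases Nat.lt_or_ge ((l : ℕ) + 2) q.1 with hgt2 | hle2
      · -- q.1 > l + 2
        obtain ⟨m', rfl⟩ : ∃ m', m = m' + 1 := ⟨m - 1, by omega⟩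
        have hlm : (l : ℕ) < m' + 1 := by omega
        have hface : P.faceN q.1 q.2 (G (m' + 1) l u v)
            = G m' ⟨(l : ℕ), hlm⟩
                (P.face ⟨q.1 - 1 - 1, by omega⟩ q.2 u)
                (P.face ⟨q.1 - 1 - 1, by omega⟩ q.2 v) := by
          rw [faceN_eq_s17 P q.1 q.2 _ (by omega)]
          exact hG.2.2.2 m' l ⟨q.1 - 1, by omega⟩ q.2 u v huv (by simpa using by omega)
        rw [hface]
        have hcomp : P.face (⟨(l : ℕ), hlm⟩ : Fin (m' + 1)) true
              (P.face ⟨q.1 - 1 - 1, by omega⟩ q.2 u)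
            = P.face (⟨(l : ℕ), hlm⟩ : Fin (m' + 1)) false
              (P.face ⟨q.1 - 1 - 1, by omega⟩ q.2 v) := by
          rw [show (⟨q.1 - 1 - 1, by omega⟩ : Fin (m' + 2)) = ⟨q.1 - 2, by omega⟩ from
            Fin.ext (by simp; omega)]
          rw [fswap_high P u (q.1 - 2) (l : ℕ) q.2 true (by omega) (by omega)]
          rw [fswap_high P v (q.1 - 2) (l : ℕ) q.2 false (by omega) (by omega)]
          rw [show (⟨(l : ℕ), by omega⟩ : Fin (m' + 2)) = l from Fin.ext rfl]
          rw [huv]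
        rw [insSorted_append_le _ _ _ (by simp; omega)] at hcs
        exact ih m' _ _ _ hcomp htail (fun p hp => by
          have h1 := hbd p (by simp [hp])
          have h2 := hhead p hp
          refine ⟨h1.1, by omega, by simp; omega⟩) (constSign_dropLast hcs)
      · -- q.1 = l + 2 : the sign is forced to be +, giving a degeneracy
        have hq : q = ((l : ℕ) + 2, q.2) := Prod.ext (by omega) rfl
        have hall : ∀ p ∈ R.reverse, p.1 < (l : ℕ) + 1 := by
          intro p hp
          have h2 := hhead p (List.mem_reverse.mp hp)
          have h1 := hbd p (by simp [List.mem_reverse.mp hp])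
          omega
        have hsgn : q.2 = true := by
          rw [insSorted_append_le _ _ _ (by omega), insSorted_all_lt _ _ hall, hq] at hcs
          exact constSign_top_sign _ _ _ hcs
        have hface : P.faceN q.1 q.2 (G m l u v) = E m l (P.face l true v) := by
          rw [faceN_eq_s17 P q.1 q.2 _ (by omega), hsgn]
          rw [show (⟨q.1 - 1, by omega⟩ : Fin (m + 2)) = l.succ from
            Fin.ext (by simp only [Fin.val_succ]; omega)]
          exact (hG.2.1 m l u v huv).2.2
        rw [hface]
        exact lemA2 P E hE R m l _ htail (fun p hp => by
          have h1 := hbd p (by simp [hp])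
          have h2 := hhead p hp
          refine ⟨h1.1, by omega, by omega⟩)


lemma pairwise_rev_of_chain {p : ℕ × Bool} {L : List (ℕ × Bool)}
    (hchain : (p :: L).Chain' (fun p q => p.1 < q.1)) :
    ((p :: L).reverse).Pairwise (fun p q => q.1 < p.1) := by
  haveI : IsTrans (ℕ × Bool) (fun p q => p.1 < q.1) := ⟨fun a b c h1 h2 => lt_trans h1 h2⟩
  rw [List.pairwise_reverse]
  exact List.isChain_iff_pairwise.mp hchain

lemma comp_box_adm (hE : P.IsDegSys E) (hG : P.IsCompSys E G) (m : ℕ) (l : Fin (m + 1))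
    (u v : P.X (m + 1)) (huv : P.face l true u = P.face l false v) :
    P.AdmBox l.castSucc false (fun i α => P.face i α (G m l u v)) := by
  constructor
  · intro j i h α β _ _
    exact P.face_rel j i h α β (G m l u v)
  · intro p L hC
    obtain ⟨⟨hchain, hbd⟩, havoid, hcs⟩ := hC
    rw [thin_apBox_eq P (G m l u v) _ (fun i α => rfl) p L]
    refine lemA P E G hE hG ((p :: L).reverse) m l u v huv (pairwise_rev_of_chain hchain)
      (fun r hr => ?_) ?_
    · rw [List.mem_reverse] at hr
      have h1 := hbd r hr
      have h2 := havoid r hr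
      exact ⟨h1.1, h1.2, by simpa using h2⟩
    · rw [List.reverse_reverse]
      simpa using hcs

lemma eps_box_adm (hE : P.IsDegSys E) (m : ℕ) (k : Fin (m + 1)) (w : P.X m) (γ : Bool) :
    P.AdmBox k γ (fun i α => P.face i α (E m k w)) := by
  constructor
  · intro j i h α β _ _
    exact P.face_rel j i h α β (E m k w)
  · intro p L hC
    obtain ⟨⟨hchain, hbd⟩, havoid, _⟩ := hC
    rw [thin_apBox_eq P (E m k w) _ (fun i α => rfl) p L]
    refine lemA2 P E hE ((p :: L).reverse) m k w (pairwise_rev_of_chain hchain)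
      (fun r hr => ?_)
    rw [List.mem_reverse] at hr
    have h1 := hbd r hr
    have h2 := havoid r hr
    exact ⟨h1.1, h1.2, h2⟩

lemma comp_unique (hP : P.IsComplete) (hE : P.IsDegSys E) (hG : P.IsCompSys E G)
    (m : ℕ) (l : Fin (m + 1)) (u v : P.X (m + 1)) (huv : P.face l true u = P.face l false v)
    (T : P.X (m + 2)) (hT : P.thin T)
    (hf : ∀ (i : Fin (m + 2)) (α : Bool), ((i, α) : Fin (m + 2) × Bool) ≠ (l.castSucc, false) →
      P.face i α T = P.face i α (G m l u v)) : T = G m l u v := by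
  obtain ⟨x0, _, hun⟩ := hP.1 (m + 1) l.castSucc false
    (fun i α => P.face i α (G m l u v)) (comp_box_adm P E G hE hG m l u v huv)
  have e1 : T = x0 := hun T ⟨hT, fun i α h => hf i α h⟩
  have e2 : G m l u v = x0 := hun _ ⟨hG.1 m l u v huv, fun i α h => rfl⟩
  rw [e1, e2]

lemma eps_unique (hP : P.IsComplete) (hE : P.IsDegSys E)
    (m : ℕ) (k : Fin (m + 1)) (w : P.X m) (T : P.X (m + 1)) (hT : P.thin T)
    (hf : ∀ (i : Fin (m + 1)) (α : Bool), ((i, α) : Fin (m + 1) × Bool) ≠ (k, false) →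
      P.face i α T = P.face i α (E m k w)) : T = E m k w := by
  obtain ⟨x0, _, hun⟩ := hP.1 m k false
    (fun i α => P.face i α (E m k w)) (eps_box_adm P E hE m k w false)
  have e1 : T = x0 := hun T ⟨hT, fun i α h => hf i α h⟩
  have e2 : E m k w = x0 := hun _ ⟨hE.1 m k w, fun i α h => rfl⟩
  rw [e1, e2]

lemma thin_comp_face (hP : P.IsComplete) (hE : P.IsDegSys E) (hG : P.IsCompSys E G)
    (m : ℕ) (K : Fin (m + 1)) (A B : P.X (m + 1))
    (hAB : P.face K true A = P.face K false B) (hA : P.thin A) (hB : P.thin B) :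
    P.thin (P.face K.castSucc false (G m K A B)) := by
  refine hP.2.2 (m + 1) K.castSucc false (fun i α => P.face i α (G m K A B)) (G m K A B)
    (comp_box_adm P E G hE hG m K A B hAB) (hG.1 m K A B hAB) (fun i α h => rfl) ?_
  intro i α hne
  show P.thin (P.face i α (G m K A B))
  rcases Nat.lt_trichotomy (i : ℕ) (K : ℕ) with hlt | heq | hgt
  · -- below
    obtain ⟨m', rfl⟩ : ∃ m', m = m' + 1 := ⟨m - 1, by have := K.isLt; omega⟩
    rw [show i = (⟨(i : ℕ), by omega⟩ : Fin (m' + 3)) from Fin.ext rfl]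
    rw [hG.2.2.1 m' K ⟨(i : ℕ), by omega⟩ α A B hAB (by simpa using hlt)]
    refine hG.1 m' _ _ _ ?_
    rw [fswap_low P A ((K : ℕ) - 1) (i : ℕ) true α (by omega) (by omega)]
    rw [fswap_low P B ((K : ℕ) - 1) (i : ℕ) false α (by omega) (by omega)]
    rw [show (⟨(K : ℕ) - 1 + 1, by omega⟩ : Fin (m' + 2)) = K from Fin.ext (by simp; omega)]
    rw [hAB]
  · -- at K : the face is B (α must be true)
    cases α with
    | false =>
      exact absurd (by exact Prod.ext (Fin.ext heq) rfl) hne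
    | true =>
      rw [show i = K.castSucc from Fin.ext (by simpa using heq)]
      rw [(hG.2.1 m K A B hAB).1]
      exact hB
  · rcases Nat.lt_or_ge ((K : ℕ) + 1) (i : ℕ) with hgt2 | hle2
    · -- above K + 1
      obtain ⟨m', rfl⟩ : ∃ m', m = m' + 1 := ⟨m - 1, by have := i.isLt; omega⟩
      rw [show i = (⟨(i : ℕ), by omega⟩ : Fin (m' + 3)) from Fin.ext rfl]
      rw [hG.2.2.2 m' K ⟨(i : ℕ), by omega⟩ α A B hAB (by simpa using hgt2)]
      refine hG.1 m' _ _ _ ?_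
      rw [fswap_high P A ((i : ℕ) - 1) (K : ℕ) α true (by omega) (by omega)]
      rw [fswap_high P B ((i : ℕ) - 1) (K : ℕ) α false (by omega) (by omega)]
      rw [show (⟨(K : ℕ), by omega⟩ : Fin (m' + 2)) = K from Fin.ext rfl]
      rw [hAB]
    · -- at K + 1
      have hiK : (i : ℕ) = (K : ℕ) + 1 := by omega
      rw [show i = K.succ from Fin.ext (by simpa using hiK)]
      cases α with
      | false =>
        rw [(hG.2.1 m K A B hAB).2.1]
        exact hA
      | true =>
        rw [(hG.2.1 m K A B hAB).2.2]
        exact hE.1 m K _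


lemma lemE (hP : P.IsComplete) (hE : P.IsDegSys E) :
    ∀ (m : ℕ) (a b : Fin (m + 1)), (a : ℕ) ≤ (b : ℕ) → ∀ x : P.X m,
      E (m + 1) a.castSucc (E m b x) = E (m + 1) b.succ (E m a x) := by
  intro m
  induction m using Nat.strong_induction_on with | _ m IH =>
  intro a b hab x
  refine (eps_unique P E hP hE (m + 1) a.castSucc (E m b x)
    (E (m + 1) b.succ (E m a x)) (hE.1 _ _ _) ?_).symm
  intro i α _
  rcases i with ⟨iv, hiv⟩
  rcases Nat.lt_trichotomy iv (a : ℕ) with hlt | heq | hgt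
  · -- iv < a ≤ b
    obtain ⟨m', rfl⟩ : ∃ m', m = m' + 1 := ⟨m - 1, by have := a.isLt; omega⟩
    rw [hE.2.2.1 (m' + 1) b.succ ⟨iv, hiv⟩ α (E (m' + 1) a x)
      (show iv < (b : ℕ) + 1 from by omega)]
    rw [hE.2.2.1 (m' + 1) a.castSucc ⟨iv, hiv⟩ α (E (m' + 1) b x)
      (show iv < (a : ℕ) from hlt)]
    rw [hE.2.2.1 m' a ⟨iv, by omega⟩ α x (show iv < (a : ℕ) from hlt)]
    rw [hE.2.2.1 m' b ⟨iv, by omega⟩ α x (show iv < (b : ℕ) from by omega)]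
    rw [show (⟨(b.succ : ℕ) - 1, by have := b.succ.isLt; omega⟩ : Fin (m' + 2))
        = (⟨(b : ℕ) - 1, by have := b.isLt; omega⟩ : Fin (m' + 1)).succ from
        Fin.ext (by simp; omega)]
    rw [show (⟨(a.castSucc : ℕ) - 1, by have := a.castSucc.isLt; omega⟩ : Fin (m' + 2))
        = (⟨(a : ℕ) - 1, by have := a.isLt; omega⟩ : Fin (m' + 1)).castSucc from
        Fin.ext (by simp)]
    exact (IH m' (by omega) ⟨(a : ℕ) - 1, by have := a.isLt; omega⟩
      ⟨(b : ℕ) - 1, by have := b.isLt; omega⟩ (by simp; omega) _).symm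
  · -- iv = a
    rw [show (⟨iv, hiv⟩ : Fin (m + 2)) = a.castSucc from Fin.ext (by simp; omega)]
    rw [hE.2.1 (m + 1) a.castSucc α (E m b x)]
    rw [hE.2.2.1 m b.succ a.castSucc α (E m a x)
      (show (a : ℕ) < (b : ℕ) + 1 from by omega)]
    rw [show (⟨(a.castSucc : ℕ), by have h1 := a.isLt; have h2 := b.isLt; simp only [Fin.coe_castSucc, Fin.val_succ]; omega⟩ : Fin (m + 1)) = a from
        Fin.ext (by simp)]
    rw [hE.2.1 m a α x]
    rw [show (⟨(b.succ : ℕ) - 1, by have := b.succ.isLt; omega⟩ : Fin (m + 1)) = b from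
        Fin.ext (by simp)]
  · rcases Nat.lt_trichotomy iv ((b : ℕ) + 1) with hlt2 | heq2 | hgt2
    · -- a < iv ≤ b
      obtain ⟨m', rfl⟩ : ∃ m', m = m' + 1 := ⟨m - 1, by have := b.isLt; omega⟩
      rw [hE.2.2.1 (m' + 1) b.succ ⟨iv, hiv⟩ α (E (m' + 1) a x)
        (show iv < (b : ℕ) + 1 from hlt2)]
      rw [hE.2.2.2 (m' + 1) a.castSucc ⟨iv, hiv⟩ α (E (m' + 1) b x)
        (show (a : ℕ) < iv from hgt)]
      rw [hE.2.2.2 m' a ⟨iv, by omega⟩ α x (show (a : ℕ) < iv from hgt)]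
      rw [hE.2.2.1 m' b ⟨iv - 1, by omega⟩ α x (show iv - 1 < (b : ℕ) from by omega)]
      rw [show (⟨(b.succ : ℕ) - 1, by have := b.succ.isLt; omega⟩ : Fin (m' + 2))
          = (⟨(b : ℕ) - 1, by have := b.isLt; omega⟩ : Fin (m' + 1)).succ from
          Fin.ext (by simp; omega)]
      rw [show (⟨(a.castSucc : ℕ), by have h1 := a.isLt; have h2 := b.isLt; simp only [Fin.coe_castSucc, Fin.val_succ]; omega⟩ : Fin (m' + 2))
          = (⟨(a : ℕ), by omega⟩ : Fin (m' + 1)).castSucc from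
          Fin.ext (by simp)]
      exact (IH m' (by omega) ⟨(a : ℕ), by omega⟩
        ⟨(b : ℕ) - 1, by have := b.isLt; omega⟩ (by simp; omega) _).symm
    · -- iv = b + 1
      rw [show (⟨iv, hiv⟩ : Fin (m + 2)) = b.succ from Fin.ext (by simp; omega)]
      rw [hE.2.1 (m + 1) b.succ α (E m a x)]
      rw [hE.2.2.2 m a.castSucc b.succ α (E m b x)
        (show (a : ℕ) < (b : ℕ) + 1 from by omega)]
      rw [show (⟨(b.succ : ℕ) - 1, by have := b.succ.isLt; omega⟩ : Fin (m + 1)) = b from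
          Fin.ext (by simp)]
      rw [hE.2.1 m b α x]
      rw [show (⟨(a.castSucc : ℕ), by have h1 := a.isLt; have h2 := b.isLt; simp only [Fin.coe_castSucc, Fin.val_succ]; omega⟩ : Fin (m + 1)) = a from
          Fin.ext (by simp)]
    · -- iv > b + 1
      obtain ⟨m', rfl⟩ : ∃ m', m = m' + 1 := ⟨m - 1, by omega⟩
      rw [hE.2.2.2 (m' + 1) b.succ ⟨iv, hiv⟩ α (E (m' + 1) a x)
        (show (b : ℕ) + 1 < iv from hgt2)]
      rw [hE.2.2.2 (m' + 1) a.castSucc ⟨iv, hiv⟩ α (E (m' + 1) b x)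
        (show (a : ℕ) < iv from hgt)]
      rw [hE.2.2.2 m' a ⟨iv - 1, by omega⟩ α x (show (a : ℕ) < iv - 1 from by omega)]
      rw [hE.2.2.2 m' b ⟨iv - 1, by omega⟩ α x (show (b : ℕ) < iv - 1 from by omega)]
      rw [show (⟨(b.succ : ℕ), by have h1 := a.isLt; have h2 := b.isLt; simp only [Fin.coe_castSucc, Fin.val_succ]; omega⟩ : Fin (m' + 2))
          = (⟨(b : ℕ), by omega⟩ : Fin (m' + 1)).succ from
          Fin.ext (by simp)]
      rw [show (⟨(a.castSucc : ℕ), by have h1 := a.isLt; have h2 := b.isLt; simp only [Fin.coe_castSucc, Fin.val_succ]; omega⟩ : Fin (m' + 2))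
          = (⟨(a : ℕ), by omega⟩ : Fin (m' + 1)).castSucc from
          Fin.ext (by simp)]
      exact (IH m' (by omega) ⟨(a : ℕ), by omega⟩ ⟨(b : ℕ), by omega⟩ hab _).symm


lemma lemD (hP : P.IsComplete) (hE : P.IsDegSys E) (hG : P.IsCompSys E G) :
    ∀ (m : ℕ) (k l : Fin (m + 2)) (hkl : (k : ℕ) < (l : ℕ)) (a b : P.X (m + 1))
      (hab : P.face ⟨(k : ℕ), by have := l.isLt; omega⟩ true a
           = P.face ⟨(k : ℕ), by have := l.isLt; omega⟩ false b),
      G (m + 1) k (E (m + 1) l a) (E (m + 1) l b)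
        = E (m + 2) l.succ (G m ⟨(k : ℕ), by have := l.isLt; omega⟩ a b) := by
  intro m
  induction m using Nat.strong_induction_on with | _ m IH =>
  intro k l hkl a b hab
  have hkm : (k : ℕ) < m + 1 := by have := l.isLt; omega
  have huv : P.face k true (E (m + 1) l a) = P.face k false (E (m + 1) l b) := by
    rw [show k = (⟨(k : ℕ), by omega⟩ : Fin (m + 2)) from Fin.ext rfl]
    rw [hE.2.2.1 m l ⟨(k : ℕ), by omega⟩ true a (show (k : ℕ) < (l : ℕ) from hkl)]
    rw [hE.2.2.1 m l ⟨(k : ℕ), by omega⟩ false b (show (k : ℕ) < (l : ℕ) from hkl)]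
    rw [hab]
  refine (comp_unique P E G hP hE hG (m + 1) k (E (m + 1) l a) (E (m + 1) l b) huv
    (E (m + 2) l.succ (G m ⟨(k : ℕ), by omega⟩ a b)) (hE.1 _ _ _) ?_).symm
  intro i α hne
  rcases i with ⟨iv, hiv⟩
  rcases Nat.lt_trichotomy iv (k : ℕ) with hlt | heq | hgt
  · -- iv < k
    obtain ⟨m'', rfl⟩ : ∃ j, m = j + 1 := ⟨m - 1, by omega⟩
    rw [hE.2.2.1 (m'' + 2) l.succ ⟨iv, hiv⟩ α (G (m'' + 1) ⟨(k : ℕ), by omega⟩ a b)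
      (show iv < (l : ℕ) + 1 from by omega)]
    rw [hG.2.2.1 m'' ⟨(k : ℕ), by omega⟩ ⟨iv, by omega⟩ α a b hab
      (show iv < (k : ℕ) from hlt)]
    rw [hG.2.2.1 (m'' + 1) k ⟨iv, hiv⟩ α _ _ huv (show iv < (k : ℕ) from hlt)]
    rw [hE.2.2.1 (m'' + 1) l ⟨iv, by omega⟩ α a (show iv < (l : ℕ) from by omega)]
    rw [hE.2.2.1 (m'' + 1) l ⟨iv, by omega⟩ α b (show iv < (l : ℕ) from by omega)]
    have hab' : P.face ⟨(k : ℕ) - 1, by omega⟩ true (P.face ⟨iv, by omega⟩ α a)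
        = P.face ⟨(k : ℕ) - 1, by omega⟩ false (P.face ⟨iv, by omega⟩ α b) := by
      rw [fswap_low P a ((k : ℕ) - 1) iv true α (by omega) (by omega)]
      rw [fswap_low P b ((k : ℕ) - 1) iv false α (by omega) (by omega)]
      rw [show (⟨(k : ℕ) - 1 + 1, by omega⟩ : Fin (m'' + 2))
        = (⟨(k : ℕ), by omega⟩ : Fin (m'' + 2)) from Fin.ext (by simp; omega)]
      rw [hab]
    have key := IH m'' (by omega) ⟨(k : ℕ) - 1, by omega⟩ ⟨(l : ℕ) - 1, by omega⟩
      (by simp; omega) (P.face ⟨iv, by omega⟩ α a) (P.face ⟨iv, by omega⟩ α b) hab'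
    rw [show (⟨(l.succ : ℕ) - 1, by have := l.succ.isLt; omega⟩ : Fin (m'' + 3))
        = (⟨(l : ℕ) - 1, by have := l.isLt; omega⟩ : Fin (m'' + 2)).succ from
        Fin.ext (by simp; omega)]
    exact key.symm
  · -- iv = k
    have hik : (⟨iv, hiv⟩ : Fin (m + 3)) = k.castSucc := Fin.ext (by simp; omega)
    cases α with
    | false => exact absurd (by rw [hik]) hne
    | true =>
      rw [hik, (hG.2.1 (m + 1) k _ _ huv).1]
      rw [hE.2.2.1 (m + 1) l.succ k.castSucc true (G m ⟨(k : ℕ), by omega⟩ a b)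
        (show (k : ℕ) < (l : ℕ) + 1 from by omega)]
      rw [show (⟨(k.castSucc : ℕ), by have h1 := k.isLt; simp only [Fin.coe_castSucc]; omega⟩
          : Fin (m + 2)) = (⟨(k : ℕ), by omega⟩ : Fin (m + 1)).castSucc from Fin.ext (by simp)]
      rw [(hG.2.1 m ⟨(k : ℕ), by omega⟩ a b hab).1]
      rfl
  · -- iv > k
    rcases Nat.lt_or_ge ((k : ℕ) + 1) iv with hgt1 | hle1
    · -- iv > k + 1
      rcases Nat.lt_trichotomy iv ((l : ℕ) + 1) with hlt2 | heq2 | hgt2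
      · -- k + 1 < iv < l + 1
        obtain ⟨m'', rfl⟩ : ∃ j, m = j + 1 := ⟨m - 1, by omega⟩
        rw [hE.2.2.1 (m'' + 2) l.succ ⟨iv, hiv⟩ α (G (m'' + 1) ⟨(k : ℕ), by omega⟩ a b)
          (show iv < (l : ℕ) + 1 from hlt2)]
        rw [hG.2.2.2 m'' ⟨(k : ℕ), by omega⟩ ⟨iv, by omega⟩ α a b hab
          (show (k : ℕ) + 1 < iv from hgt1)]
        rw [hG.2.2.2 (m'' + 1) k ⟨iv, hiv⟩ α _ _ huv (show (k : ℕ) + 1 < iv from hgt1)]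
        rw [hE.2.2.1 (m'' + 1) l ⟨iv - 1, by omega⟩ α a (show iv - 1 < (l : ℕ) from by omega)]
        rw [hE.2.2.1 (m'' + 1) l ⟨iv - 1, by omega⟩ α b (show iv - 1 < (l : ℕ) from by omega)]
        have hab' : P.face ⟨(k : ℕ), by omega⟩ true (P.face ⟨iv - 1, by omega⟩ α a)
            = P.face ⟨(k : ℕ), by omega⟩ false (P.face ⟨iv - 1, by omega⟩ α b) := by
          rw [fswap_high P a (iv - 1) (k : ℕ) α true (by omega) (by omega)]
          rw [fswap_high P b (iv - 1) (k : ℕ) α false (by omega) (by omega)]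
          rw [hab]
        have key := IH m'' (by omega) ⟨(k : ℕ), by omega⟩ ⟨(l : ℕ) - 1, by omega⟩
          (by simp; omega) (P.face ⟨iv - 1, by omega⟩ α a) (P.face ⟨iv - 1, by omega⟩ α b) hab'
        rw [show (⟨(l.succ : ℕ) - 1, by have := l.succ.isLt; omega⟩ : Fin (m'' + 3))
            = (⟨(l : ℕ) - 1, by have := l.isLt; omega⟩ : Fin (m'' + 2)).succ from
            Fin.ext (by simp; omega)]
        exact key.symm
      · -- iv = l + 1
        have hik : (⟨iv, hiv⟩ : Fin (m + 3)) = l.succ := Fin.ext (by simp; omega)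
        rw [hik, hE.2.1 (m + 2) l.succ α (G m ⟨(k : ℕ), by omega⟩ a b)]
        rw [hG.2.2.2 m k l.succ α _ _ huv (show (k : ℕ) + 1 < (l : ℕ) + 1 from by omega)]
        rw [show (⟨(l.succ : ℕ) - 1, by have := l.succ.isLt; omega⟩ : Fin (m + 2)) = l from
          Fin.ext (by simp)]
        rw [hE.2.1 (m + 1) l α a, hE.2.1 (m + 1) l α b]
      · -- iv > l + 1
        obtain ⟨m'', rfl⟩ : ∃ j, m = j + 1 := ⟨m - 1, by omega⟩
        rw [hE.2.2.2 (m'' + 2) l.succ ⟨iv, hiv⟩ α (G (m'' + 1) ⟨(k : ℕ), by omega⟩ a b)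
          (show (l : ℕ) + 1 < iv from hgt2)]
        rw [hG.2.2.2 m'' ⟨(k : ℕ), by omega⟩ ⟨iv - 1, by omega⟩ α a b hab
          (show (k : ℕ) + 1 < iv - 1 from by omega)]
        rw [hG.2.2.2 (m'' + 1) k ⟨iv, hiv⟩ α _ _ huv (show (k : ℕ) + 1 < iv from by omega)]
        rw [hE.2.2.2 (m'' + 1) l ⟨iv - 1, by omega⟩ α a (show (l : ℕ) < iv - 1 from by omega)]
        rw [hE.2.2.2 (m'' + 1) l ⟨iv - 1, by omega⟩ α b (show (l : ℕ) < iv - 1 from by omega)]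
        have hab' : P.face ⟨(k : ℕ), by omega⟩ true (P.face ⟨iv - 1 - 1, by omega⟩ α a)
            = P.face ⟨(k : ℕ), by omega⟩ false (P.face ⟨iv - 1 - 1, by omega⟩ α b) := by
          rw [fswap_high P a (iv - 1 - 1) (k : ℕ) α true (by omega) (by omega)]
          rw [fswap_high P b (iv - 1 - 1) (k : ℕ) α false (by omega) (by omega)]
          rw [hab]
        have key := IH m'' (by omega) ⟨(k : ℕ), by omega⟩ ⟨(l : ℕ), by omega⟩
          (by simp; omega) (P.face ⟨iv - 1 - 1, by omega⟩ α a)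
          (P.face ⟨iv - 1 - 1, by omega⟩ α b) hab'
        rw [show (⟨(l.succ : ℕ), by have h1 := hiv; simp only [Fin.val_succ]; omega⟩
            : Fin (m'' + 3)) = (⟨(l : ℕ), by omega⟩ : Fin (m'' + 2)).succ from
            Fin.ext (by simp)]
        exact key.symm
    · -- iv = k + 1
      have hik : (⟨iv, hiv⟩ : Fin (m + 3)) = k.succ := Fin.ext (by simp; omega)
      rw [hik]
      cases α with
      | false =>
        rw [(hG.2.1 (m + 1) k _ _ huv).2.1]
        rw [hE.2.2.1 (m + 1) l.succ k.succ false (G m ⟨(k : ℕ), by omega⟩ a b)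
          (show (k : ℕ) + 1 < (l : ℕ) + 1 from by omega)]
        rw [show (⟨(k.succ : ℕ), by have h1 := k.isLt; simp only [Fin.val_succ]; omega⟩
            : Fin (m + 2)) = (⟨(k : ℕ), by omega⟩ : Fin (m + 1)).succ from Fin.ext (by simp)]
        rw [(hG.2.1 m ⟨(k : ℕ), by omega⟩ a b hab).2.1]
        rfl
      | true =>
        rw [(hG.2.1 (m + 1) k _ _ huv).2.2]
        rw [hE.2.2.1 (m + 1) l.succ k.succ true (G m ⟨(k : ℕ), by omega⟩ a b)
          (show (k : ℕ) + 1 < (l : ℕ) + 1 from by omega)]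
        rw [show (⟨(k.succ : ℕ), by have h1 := k.isLt; simp only [Fin.val_succ]; omega⟩
            : Fin (m + 2)) = (⟨(k : ℕ), by omega⟩ : Fin (m + 1)).succ from Fin.ext (by simp)]
        rw [(hG.2.1 m ⟨(k : ℕ), by omega⟩ a b hab).2.2]
        -- LHS : E (m+1) ⟨l.succ - 1⟩ (E m ⟨k⟩ c), RHS : E (m+1) k (face k true (E (m+1) l b))
        have hfb : P.face k true (E (m + 1) l b)
            = E m ⟨(l : ℕ) - 1, by have := l.isLt; omega⟩
                (P.face ⟨(k : ℕ), by omega⟩ true b) := by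
          conv_lhs => rw [show k = (⟨(k : ℕ), by omega⟩ : Fin (m + 2)) from Fin.ext rfl]
          exact hE.2.2.1 m l ⟨(k : ℕ), by omega⟩ true b (show (k : ℕ) < (l : ℕ) from hkl)
        rw [hfb]
        have key := lemE P E hP hE m ⟨(k : ℕ), by omega⟩ ⟨(l : ℕ) - 1, by omega⟩
          (by simp; omega) (P.face ⟨(k : ℕ), by omega⟩ true b)
        rw [show (⟨(l.succ : ℕ) - 1, by have := l.succ.isLt; omega⟩ : Fin (m + 2))
            = (⟨(l : ℕ) - 1, by have := l.isLt; omega⟩ : Fin (m + 1)).succ from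
            Fin.ext (by simp; omega)]
        exact key.symm


set_option maxHeartbeats 2000000 in
lemma keyLem (hP : P.IsComplete) (hE : P.IsDegSys E) (hG : P.IsCompSys E G) :
    ∀ (m : ℕ) (k l : Fin (m + 2)) (hkl : (k : ℕ) < (l : ℕ)) (x y z w : P.X (m + 2))
      (h1 : P.face k true x = P.face k false y)
      (h2 : P.face k true z = P.face k false w)
      (h3 : P.face l true x = P.face l false z)
      (h4 : P.face l true y = P.face l false w),
      P.face (⟨(k : ℕ), by omega⟩ : Fin (m + 4)) false
        (G (m + 2) (⟨(k : ℕ), by omega⟩ : Fin (m + 3))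
          (G (m + 1) l x z) (G (m + 1) l y w))
        = G (m + 1) l
            (P.face (⟨(k : ℕ), by omega⟩ : Fin (m + 3)) false (G (m + 1) k x y))
            (P.face (⟨(k : ℕ), by omega⟩ : Fin (m + 3)) false (G (m + 1) k z w)) := by
  intro m
  induction m using Nat.strong_induction_on with | _ m IH =>
  intro k l hkl x y z w h1 h2 h3 h4
  have hAB : P.face (⟨(k : ℕ), by omega⟩ : Fin (m + 3)) true (G (m + 1) l x z)
      = P.face (⟨(k : ℕ), by omega⟩ : Fin (m + 3)) false (G (m + 1) l y w) := by
    rw [hG.2.2.1 m l ⟨(k : ℕ), by omega⟩ true x z h3 (show (k : ℕ) < (l : ℕ) from hkl)]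
    rw [hG.2.2.1 m l ⟨(k : ℕ), by omega⟩ false y w h4 (show (k : ℕ) < (l : ℕ) from hkl)]
    rw [show (⟨(k : ℕ), by omega⟩ : Fin (m + 2)) = k from Fin.ext rfl]
    rw [h1, h2]
  have h5 : P.face l true (P.face (⟨(k : ℕ), by omega⟩ : Fin (m + 3)) false (G (m + 1) k x y))
      = P.face l false (P.face (⟨(k : ℕ), by omega⟩ : Fin (m + 3)) false (G (m + 1) k z w)) := by
    rw [P.face_rel (⟨(k : ℕ), by omega⟩ : Fin (m + 3)) l
      (show (k : ℕ) ≤ (l : ℕ) from by omega) true false (G (m + 1) k x y)]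
    rw [P.face_rel (⟨(k : ℕ), by omega⟩ : Fin (m + 3)) l
      (show (k : ℕ) ≤ (l : ℕ) from by omega) false false (G (m + 1) k z w)]
    rw [hG.2.2.2 m k ⟨(l : ℕ) + 1, by omega⟩ true x y h1
      (show (k : ℕ) + 1 < (l : ℕ) + 1 from by omega)]
    rw [hG.2.2.2 m k ⟨(l : ℕ) + 1, by omega⟩ false z w h2
      (show (k : ℕ) + 1 < (l : ℕ) + 1 from by omega)]
    rw [show (⟨(l : ℕ) + 1 - 1, by omega⟩ : Fin (m + 2)) = l from Fin.ext (by simp)]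
    rw [h3, h4]
  refine comp_unique P E G hP hE hG (m + 1) l _ _ h5
    (P.face (⟨(k : ℕ), by omega⟩ : Fin (m + 4)) false
      (G (m + 2) (⟨(k : ℕ), by omega⟩ : Fin (m + 3)) (G (m + 1) l x z) (G (m + 1) l y w)))
    (thin_comp_face P E G hP hE hG (m + 2) (⟨(k : ℕ), by omega⟩ : Fin (m + 3))
      (G (m + 1) l x z) (G (m + 1) l y w) hAB (hG.1 (m + 1) l x z h3) (hG.1 (m + 1) l y w h4))
    ?_
  intro i α hne
  rcases i with ⟨iv, hiv⟩
  rcases Nat.lt_trichotomy iv (k : ℕ) with hlt | heq | hgt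
  · -- iv < k
    obtain ⟨m'', rfl⟩ : ∃ j, m = j + 1 := ⟨m - 1, by omega⟩
    rw [fswap_high P (G (m'' + 3) (⟨(k : ℕ), by omega⟩ : Fin (m'' + 4))
        (G (m'' + 2) l x z) (G (m'' + 2) l y w)) (k : ℕ) iv false α hlt (by omega)]
    rw [hG.2.2.1 (m'' + 2) (⟨(k : ℕ), by omega⟩ : Fin (m'' + 4)) ⟨iv, by omega⟩ α _ _ hAB
      (show iv < (k : ℕ) from hlt)]
    rw [hG.2.2.1 (m'' + 1) l ⟨iv, by omega⟩ α x z h3 (show iv < (l : ℕ) from by omega)]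
    rw [hG.2.2.1 (m'' + 1) l ⟨iv, by omega⟩ α y w h4 (show iv < (l : ℕ) from by omega)]
    rw [hG.2.2.1 (m'' + 1) l ⟨iv, hiv⟩ α _ _ h5 (show iv < (l : ℕ) from by omega)]
    rw [fswap_high P (G (m'' + 2) k x y) (k : ℕ) iv false α hlt (by omega)]
    rw [fswap_high P (G (m'' + 2) k z w) (k : ℕ) iv false α hlt (by omega)]
    rw [hG.2.2.1 (m'' + 1) k ⟨iv, by omega⟩ α x y h1 (show iv < (k : ℕ) from hlt)]
    rw [hG.2.2.1 (m'' + 1) k ⟨iv, by omega⟩ α z w h2 (show iv < (k : ℕ) from hlt)]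
    have h1' : P.face (⟨(k : ℕ) - 1, by omega⟩ : Fin (m'' + 2)) true
          (P.face ⟨iv, by omega⟩ α x)
        = P.face (⟨(k : ℕ) - 1, by omega⟩ : Fin (m'' + 2)) false
          (P.face ⟨iv, by omega⟩ α y) := by
      rw [fswap_low P x ((k : ℕ) - 1) iv true α (by omega) (by omega)]
      rw [fswap_low P y ((k : ℕ) - 1) iv false α (by omega) (by omega)]
      rw [show (⟨(k : ℕ) - 1 + 1, by omega⟩ : Fin (m'' + 3)) = k from Fin.ext (by simp; omega)]
      rw [h1]
    have h2' : P.face (⟨(k : ℕ) - 1, by omega⟩ : Fin (m'' + 2)) true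
          (P.face ⟨iv, by omega⟩ α z)
        = P.face (⟨(k : ℕ) - 1, by omega⟩ : Fin (m'' + 2)) false
          (P.face ⟨iv, by omega⟩ α w) := by
      rw [fswap_low P z ((k : ℕ) - 1) iv true α (by omega) (by omega)]
      rw [fswap_low P w ((k : ℕ) - 1) iv false α (by omega) (by omega)]
      rw [show (⟨(k : ℕ) - 1 + 1, by omega⟩ : Fin (m'' + 3)) = k from Fin.ext (by simp; omega)]
      rw [h2]
    have h3' : P.face (⟨(l : ℕ) - 1, by omega⟩ : Fin (m'' + 2)) true
          (P.face ⟨iv, by omega⟩ α x)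
        = P.face (⟨(l : ℕ) - 1, by omega⟩ : Fin (m'' + 2)) false
          (P.face ⟨iv, by omega⟩ α z) := by
      rw [fswap_low P x ((l : ℕ) - 1) iv true α (by omega) (by omega)]
      rw [fswap_low P z ((l : ℕ) - 1) iv false α (by omega) (by omega)]
      rw [show (⟨(l : ℕ) - 1 + 1, by omega⟩ : Fin (m'' + 3)) = l from Fin.ext (by simp; omega)]
      rw [h3]
    have h4' : P.face (⟨(l : ℕ) - 1, by omega⟩ : Fin (m'' + 2)) true
          (P.face ⟨iv, by omega⟩ α y)
        = P.face (⟨(l : ℕ) - 1, by omega⟩ : Fin (m'' + 2)) false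
          (P.face ⟨iv, by omega⟩ α w) := by
      rw [fswap_low P y ((l : ℕ) - 1) iv true α (by omega) (by omega)]
      rw [fswap_low P w ((l : ℕ) - 1) iv false α (by omega) (by omega)]
      rw [show (⟨(l : ℕ) - 1 + 1, by omega⟩ : Fin (m'' + 3)) = l from Fin.ext (by simp; omega)]
      rw [h4]
    exact IH m'' (by omega) ⟨(k : ℕ) - 1, by omega⟩ ⟨(l : ℕ) - 1, by omega⟩ (by simp; omega)
      (P.face ⟨iv, by omega⟩ α x) (P.face ⟨iv, by omega⟩ α y)
      (P.face ⟨iv, by omega⟩ α z) (P.face ⟨iv, by omega⟩ α w) h1' h2' h3' h4'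
  · -- iv = k
    rw [fswap_low P (G (m + 2) (⟨(k : ℕ), by omega⟩ : Fin (m + 3))
        (G (m + 1) l x z) (G (m + 1) l y w)) iv (k : ℕ) α false (by omega) (by omega)]
    rw [hG.2.2.1 m l ⟨iv, hiv⟩ α _ _ h5 (show iv < (l : ℕ) from by omega)]
    rw [fswap_low P (G (m + 1) k x y) iv (k : ℕ) α false (by omega) (by omega)]
    rw [fswap_low P (G (m + 1) k z w) iv (k : ℕ) α false (by omega) (by omega)]
    rw [show (⟨iv + 1, by omega⟩ : Fin (m + 3)) = k.succ from Fin.ext (by simp; omega)]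
    cases α with
    | false =>
      rw [show (⟨iv + 1, by omega⟩ : Fin (m + 4))
          = (⟨(k : ℕ), by omega⟩ : Fin (m + 3)).succ from Fin.ext (by simp; omega)]
      rw [(hG.2.1 (m + 2) (⟨(k : ℕ), by omega⟩ : Fin (m + 3)) _ _ hAB).2.1]
      rw [(hG.2.1 (m + 1) k x y h1).2.1]
      rw [(hG.2.1 (m + 1) k z w h2).2.1]
      rw [hG.2.2.1 m l ⟨(k : ℕ), by omega⟩ false x z h3 (show (k : ℕ) < (l : ℕ) from hkl)]
    | true =>
      rw [show (⟨iv + 1, by omega⟩ : Fin (m + 4))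
          = (⟨(k : ℕ), by omega⟩ : Fin (m + 3)).succ from Fin.ext (by simp; omega)]
      rw [(hG.2.1 (m + 2) (⟨(k : ℕ), by omega⟩ : Fin (m + 3)) _ _ hAB).2.2]
      rw [(hG.2.1 (m + 1) k x y h1).2.2]
      rw [(hG.2.1 (m + 1) k z w h2).2.2]
      rw [hE.2.1 (m + 2) (⟨(k : ℕ), by omega⟩ : Fin (m + 3)) false _]
      rw [hG.2.2.1 m l ⟨(k : ℕ), by omega⟩ true y w h4 (show (k : ℕ) < (l : ℕ) from hkl)]
      rw [show (⟨(k : ℕ), by omega⟩ : Fin (m + 2)) = k from Fin.ext rfl]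
      rw [hE.2.1 (m + 1) k false (P.face k true y)]
      rw [hE.2.1 (m + 1) k false (P.face k true w)]
  · -- iv > k
    rw [fswap_low P (G (m + 2) (⟨(k : ℕ), by omega⟩ : Fin (m + 3))
        (G (m + 1) l x z) (G (m + 1) l y w)) iv (k : ℕ) α false (by omega) (by omega)]
    rw [hG.2.2.2 (m + 1) (⟨(k : ℕ), by omega⟩ : Fin (m + 3)) ⟨iv + 1, by omega⟩ α _ _ hAB
      (show (k : ℕ) + 1 < iv + 1 from by omega)]
    rcases Nat.lt_trichotomy iv (l : ℕ) with hlt2 | heq2 | hgt2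
    · -- k < iv < l
      obtain ⟨m'', rfl⟩ : ∃ j, m = j + 1 := ⟨m - 1, by omega⟩
      rw [hG.2.2.1 (m'' + 1) l ⟨iv + 1 - 1, by omega⟩ α x z h3
        (show iv + 1 - 1 < (l : ℕ) from by omega)]
      rw [hG.2.2.1 (m'' + 1) l ⟨iv + 1 - 1, by omega⟩ α y w h4
        (show iv + 1 - 1 < (l : ℕ) from by omega)]
      rw [hG.2.2.1 (m'' + 1) l ⟨iv, hiv⟩ α _ _ h5 (show iv < (l : ℕ) from hlt2)]
      rw [fswap_low P (G (m'' + 2) k x y) iv (k : ℕ) α false (by omega) (by omega)]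
      rw [fswap_low P (G (m'' + 2) k z w) iv (k : ℕ) α false (by omega) (by omega)]
      rw [hG.2.2.2 (m'' + 1) k ⟨iv + 1, by omega⟩ α x y h1
        (show (k : ℕ) + 1 < iv + 1 from by omega)]
      rw [hG.2.2.2 (m'' + 1) k ⟨iv + 1, by omega⟩ α z w h2
        (show (k : ℕ) + 1 < iv + 1 from by omega)]
      have h1' : P.face (⟨(k : ℕ), by omega⟩ : Fin (m'' + 2)) true
            (P.face ⟨iv + 1 - 1, by omega⟩ α x)
          = P.face (⟨(k : ℕ), by omega⟩ : Fin (m'' + 2)) false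
            (P.face ⟨iv + 1 - 1, by omega⟩ α y) := by
        rw [fswap_high P x (iv + 1 - 1) (k : ℕ) α true (by omega) (by omega)]
        rw [fswap_high P y (iv + 1 - 1) (k : ℕ) α false (by omega) (by omega)]
        rw [show (⟨(k : ℕ), by omega⟩ : Fin (m'' + 3)) = k from Fin.ext rfl]
        rw [h1]
      have h2' : P.face (⟨(k : ℕ), by omega⟩ : Fin (m'' + 2)) true
            (P.face ⟨iv + 1 - 1, by omega⟩ α z)
          = P.face (⟨(k : ℕ), by omega⟩ : Fin (m'' + 2)) false
            (P.face ⟨iv + 1 - 1, by omega⟩ α w) := by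
        rw [fswap_high P z (iv + 1 - 1) (k : ℕ) α true (by omega) (by omega)]
        rw [fswap_high P w (iv + 1 - 1) (k : ℕ) α false (by omega) (by omega)]
        rw [show (⟨(k : ℕ), by omega⟩ : Fin (m'' + 3)) = k from Fin.ext rfl]
        rw [h2]
      have h3' : P.face (⟨(l : ℕ) - 1, by omega⟩ : Fin (m'' + 2)) true
            (P.face ⟨iv + 1 - 1, by omega⟩ α x)
          = P.face (⟨(l : ℕ) - 1, by omega⟩ : Fin (m'' + 2)) false
            (P.face ⟨iv + 1 - 1, by omega⟩ α z) := by
        rw [fswap_low P x ((l : ℕ) - 1) (iv + 1 - 1) true α (by omega) (by omega)]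
        rw [fswap_low P z ((l : ℕ) - 1) (iv + 1 - 1) false α (by omega) (by omega)]
        rw [show (⟨(l : ℕ) - 1 + 1, by omega⟩ : Fin (m'' + 3)) = l from Fin.ext (by simp; omega)]
        rw [h3]
      have h4' : P.face (⟨(l : ℕ) - 1, by omega⟩ : Fin (m'' + 2)) true
            (P.face ⟨iv + 1 - 1, by omega⟩ α y)
          = P.face (⟨(l : ℕ) - 1, by omega⟩ : Fin (m'' + 2)) false
            (P.face ⟨iv + 1 - 1, by omega⟩ α w) := by
        rw [fswap_low P y ((l : ℕ) - 1) (iv + 1 - 1) true α (by omega) (by omega)]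
        rw [fswap_low P w ((l : ℕ) - 1) (iv + 1 - 1) false α (by omega) (by omega)]
        rw [show (⟨(l : ℕ) - 1 + 1, by omega⟩ : Fin (m'' + 3)) = l from Fin.ext (by simp; omega)]
        rw [h4]
      exact IH m'' (by omega) ⟨(k : ℕ), by omega⟩ ⟨(l : ℕ) - 1, by omega⟩ (by simp; omega)
        (P.face ⟨iv + 1 - 1, by omega⟩ α x) (P.face ⟨iv + 1 - 1, by omega⟩ α y)
        (P.face ⟨iv + 1 - 1, by omega⟩ α z) (P.face ⟨iv + 1 - 1, by omega⟩ α w) h1' h2' h3' h4'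
    · -- iv = l
      have hα : α = true := by
        cases α with
        | true => rfl
        | false => exact absurd (by
            exact congrArg (fun t => (t, false)) (Fin.ext (by simpa using heq2))) hne
      subst hα
      rw [show (⟨iv + 1 - 1, by omega⟩ : Fin (m + 3)) = l.castSucc from
        Fin.ext (by simp; omega)]
      rw [(hG.2.1 (m + 1) l x z h3).1]
      rw [(hG.2.1 (m + 1) l y w h4).1]
      rw [show (⟨iv, hiv⟩ : Fin (m + 3)) = l.castSucc from Fin.ext (by simp; omega)]
      rw [(hG.2.1 (m + 1) l _ _ h5).1]
    · -- iv > l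
      rcases Nat.lt_or_ge ((l : ℕ) + 1) iv with hgt3 | hle3
      case inr =>
        -- iv = l + 1
        have hivl : iv = (l : ℕ) + 1 := by omega
        rw [show (⟨iv + 1 - 1, by omega⟩ : Fin (m + 3)) = l.succ from
          Fin.ext (by simp; omega)]
        rw [show (⟨iv, hiv⟩ : Fin (m + 3)) = l.succ from Fin.ext (by simp; omega)]
        cases α with
        | false =>
          rw [(hG.2.1 (m + 1) l x z h3).2.1]
          rw [(hG.2.1 (m + 1) l y w h4).2.1]
          rw [(hG.2.1 (m + 1) l _ _ h5).2.1]
        | true =>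
          rw [(hG.2.1 (m + 1) l x z h3).2.2]
          rw [(hG.2.1 (m + 1) l y w h4).2.2]
          rw [(hG.2.1 (m + 1) l _ _ h5).2.2]
          have hab' : P.face (⟨(k : ℕ), by omega⟩ : Fin (m + 1)) true (P.face l true z)
              = P.face (⟨(k : ℕ), by omega⟩ : Fin (m + 1)) false (P.face l true w) := by
            have e1 := P.face_rel (⟨(k : ℕ), by omega⟩ : Fin (m + 2))
              (⟨(l : ℕ) - 1, by omega⟩ : Fin (m + 1))
              (show (k : ℕ) ≤ (l : ℕ) - 1 from by omega) true true z
            have e2 := P.face_rel (⟨(k : ℕ), by omega⟩ : Fin (m + 2))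
              (⟨(l : ℕ) - 1, by omega⟩ : Fin (m + 1))
              (show (k : ℕ) ≤ (l : ℕ) - 1 from by omega) true false w
            rw [show (⟨(l : ℕ) - 1 + 1, by omega⟩ : Fin (m + 2)) = l from
              Fin.ext (by simp; omega)] at e1 e2
            rw [← e1, ← e2]
            rw [show (⟨(k : ℕ), by omega⟩ : Fin (m + 2)) = k from Fin.ext rfl]
            rw [h2]
          rw [lemD P E G hP hE hG m ⟨(k : ℕ), by omega⟩ l
            (show (k : ℕ) < (l : ℕ) from hkl) (P.face l true z) (P.face l true w) hab']
          rw [hE.2.2.1 (m + 1) l.succ ⟨(k : ℕ), by omega⟩ false _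
            (show (k : ℕ) < (l : ℕ) + 1 from by omega)]
          rw [P.face_rel (⟨(k : ℕ), by omega⟩ : Fin (m + 3)) l
            (show (k : ℕ) ≤ (l : ℕ) from by omega) true false (G (m + 1) k z w)]
          rw [hG.2.2.2 m k ⟨(l : ℕ) + 1, by omega⟩ true z w h2
            (show (k : ℕ) + 1 < (l : ℕ) + 1 from by omega)]
          rfl
      obtain ⟨m'', rfl⟩ : ∃ j, m = j + 1 := ⟨m - 1, by omega⟩
      rw [hG.2.2.2 (m'' + 1) l ⟨iv + 1 - 1, by omega⟩ α x z h3
        (show (l : ℕ) + 1 < iv + 1 - 1 from by omega)]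
      rw [hG.2.2.2 (m'' + 1) l ⟨iv + 1 - 1, by omega⟩ α y w h4
        (show (l : ℕ) + 1 < iv + 1 - 1 from by omega)]
      rw [hG.2.2.2 (m'' + 1) l ⟨iv, hiv⟩ α _ _ h5 (show (l : ℕ) + 1 < iv from hgt3)]
      rw [fswap_low P (G (m'' + 2) k x y) (iv - 1) (k : ℕ) α false (by omega) (by omega)]
      rw [fswap_low P (G (m'' + 2) k z w) (iv - 1) (k : ℕ) α false (by omega) (by omega)]
      rw [hG.2.2.2 (m'' + 1) k ⟨iv - 1 + 1, by omega⟩ α x y h1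
        (show (k : ℕ) + 1 < iv - 1 + 1 from by omega)]
      rw [hG.2.2.2 (m'' + 1) k ⟨iv - 1 + 1, by omega⟩ α z w h2
        (show (k : ℕ) + 1 < iv - 1 + 1 from by omega)]
      have h1' : P.face (⟨(k : ℕ), by omega⟩ : Fin (m'' + 2)) true
            (P.face ⟨iv + 1 - 1 - 1, by omega⟩ α x)
          = P.face (⟨(k : ℕ), by omega⟩ : Fin (m'' + 2)) false
            (P.face ⟨iv + 1 - 1 - 1, by omega⟩ α y) := by
        rw [fswap_high P x (iv + 1 - 1 - 1) (k : ℕ) α true (by omega) (by omega)]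
        rw [fswap_high P y (iv + 1 - 1 - 1) (k : ℕ) α false (by omega) (by omega)]
        rw [show (⟨(k : ℕ), by omega⟩ : Fin (m'' + 3)) = k from Fin.ext rfl]
        rw [h1]
      have h2' : P.face (⟨(k : ℕ), by omega⟩ : Fin (m'' + 2)) true
            (P.face ⟨iv + 1 - 1 - 1, by omega⟩ α z)
          = P.face (⟨(k : ℕ), by omega⟩ : Fin (m'' + 2)) false
            (P.face ⟨iv + 1 - 1 - 1, by omega⟩ α w) := by
        rw [fswap_high P z (iv + 1 - 1 - 1) (k : ℕ) α true (by omega) (by omega)]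
        rw [fswap_high P w (iv + 1 - 1 - 1) (k : ℕ) α false (by omega) (by omega)]
        rw [show (⟨(k : ℕ), by omega⟩ : Fin (m'' + 3)) = k from Fin.ext rfl]
        rw [h2]
      have h3' : P.face (⟨(l : ℕ), by omega⟩ : Fin (m'' + 2)) true
            (P.face ⟨iv + 1 - 1 - 1, by omega⟩ α x)
          = P.face (⟨(l : ℕ), by omega⟩ : Fin (m'' + 2)) false
            (P.face ⟨iv + 1 - 1 - 1, by omega⟩ α z) := by
        rw [fswap_high P x (iv + 1 - 1 - 1) (l : ℕ) α true (by omega) (by omega)]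
        rw [fswap_high P z (iv + 1 - 1 - 1) (l : ℕ) α false (by omega) (by omega)]
        rw [show (⟨(l : ℕ), by omega⟩ : Fin (m'' + 3)) = l from Fin.ext rfl]
        rw [h3]
      have h4' : P.face (⟨(l : ℕ), by omega⟩ : Fin (m'' + 2)) true
            (P.face ⟨iv + 1 - 1 - 1, by omega⟩ α y)
          = P.face (⟨(l : ℕ), by omega⟩ : Fin (m'' + 2)) false
            (P.face ⟨iv + 1 - 1 - 1, by omega⟩ α w) := by
        rw [fswap_high P y (iv + 1 - 1 - 1) (l : ℕ) α true (by omega) (by omega)]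
        rw [fswap_high P w (iv + 1 - 1 - 1) (l : ℕ) α false (by omega) (by omega)]
        rw [show (⟨(l : ℕ), by omega⟩ : Fin (m'' + 3)) = l from Fin.ext rfl]
        rw [h4]
      exact IH m'' (by omega) ⟨(k : ℕ), by omega⟩ ⟨(l : ℕ), by omega⟩ (by simpa using hkl)
        (P.face ⟨iv + 1 - 1 - 1, by omega⟩ α x) (P.face ⟨iv + 1 - 1 - 1, by omega⟩ α y)
        (P.face ⟨iv + 1 - 1 - 1, by omega⟩ α z) (P.face ⟨iv + 1 - 1 - 1, by omega⟩ α w)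
        h1' h2' h3' h4'


lemma main_lt (hP : P.IsComplete) (hE : P.IsDegSys E) (hG : P.IsCompSys E G)
    (m : ℕ) (k l : Fin (m + 2)) (hkl : (k : ℕ) < (l : ℕ)) (x y z w : P.X (m + 2))
    (h1 : P.face k true x = P.face k false y)
    (h2 : P.face k true z = P.face k false w)
    (h3 : P.face l true x = P.face l false z)
    (h4 : P.face l true y = P.face l false w) :
    P.cmp G l (P.cmp G k x y) (P.cmp G k z w)
      = P.cmp G k (P.cmp G l x z) (P.cmp G l y w) := by
  have hAB : P.face (⟨(k : ℕ), by omega⟩ : Fin (m + 3)) true (G (m + 1) l x z)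
      = P.face (⟨(k : ℕ), by omega⟩ : Fin (m + 3)) false (G (m + 1) l y w) := by
    rw [hG.2.2.1 m l ⟨(k : ℕ), by omega⟩ true x z h3 (show (k : ℕ) < (l : ℕ) from hkl)]
    rw [hG.2.2.1 m l ⟨(k : ℕ), by omega⟩ false y w h4 (show (k : ℕ) < (l : ℕ) from hkl)]
    rw [show (⟨(k : ℕ), by omega⟩ : Fin (m + 2)) = k from Fin.ext rfl]
    rw [h1, h2]
  have key := keyLem P E G hP hE hG m k l hkl x y z w h1 h2 h3 h4
  show P.face l.castSucc false (G (m + 1) l (P.cmp G k x y) (P.cmp G k z w)) = _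
  rw [show P.cmp G k x y
      = P.face (⟨(k : ℕ), by omega⟩ : Fin (m + 3)) false (G (m + 1) k x y) from rfl]
  rw [show P.cmp G k z w
      = P.face (⟨(k : ℕ), by omega⟩ : Fin (m + 3)) false (G (m + 1) k z w) from rfl]
  rw [← key]
  rw [P.face_rel (⟨(k : ℕ), by omega⟩ : Fin (m + 4)) l.castSucc
    (show (k : ℕ) ≤ (l : ℕ) from by omega) false false
    (G (m + 2) (⟨(k : ℕ), by omega⟩ : Fin (m + 3)) (G (m + 1) l x z) (G (m + 1) l y w))]
  rw [show (⟨(l.castSucc : ℕ) + 1, by have := l.castSucc.isLt; omega⟩ : Fin (m + 4))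
      = (⟨(l : ℕ) + 1, by omega⟩ : Fin (m + 4)) from Fin.ext (by simp)]
  rw [hG.2.2.2 (m + 1) (⟨(k : ℕ), by omega⟩ : Fin (m + 3)) ⟨(l : ℕ) + 1, by omega⟩ false
    _ _ hAB (show (k : ℕ) + 1 < (l : ℕ) + 1 from by omega)]
  rfl

end InterchangeAux


/-- in a complete stratified precubical set, if `k ≠ l` then
`(x ∘_k y) ∘_l (z ∘_k w) = (x ∘_l z) ∘_k (y ∘_l w)` whenever both sides are
defined. -/
theorem interchange (P : SPS) (hP : P.IsComplete)
    (E : ∀ n : ℕ, Fin (n + 1) → P.X n → P.X (n + 1)) (hE : P.IsDegSys E)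
    (G : ∀ n : ℕ, Fin (n + 1) → P.X (n + 1) → P.X (n + 1) → P.X (n + 2))
    (hG : P.IsCompSys E G)
    (n : ℕ) (k l : Fin (n + 1)) (hkl : k ≠ l) (x y z w : P.X (n + 1))
    (h1 : P.face k true x = P.face k false y)
    (h2 : P.face k true z = P.face k false w)
    (h3 : P.face l true x = P.face l false z)
    (h4 : P.face l true y = P.face l false w)
    (h5 : P.face l true (P.cmp G k x y) = P.face l false (P.cmp G k z w))
    (h6 : P.face k true (P.cmp G l x z) = P.face k false (P.cmp G l y w)) :
    P.cmp G l (P.cmp G k x y) (P.cmp G k z w) =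
      P.cmp G k (P.cmp G l x z) (P.cmp G l y w) := by
  obtain ⟨m, rfl⟩ : ∃ m, n = m + 1 := by
    cases n with
    | zero =>
      exact absurd (Fin.ext (by have := k.isLt; have := l.isLt; omega)) hkl
    | succ m => exact ⟨m, rfl⟩
  rcases Nat.lt_trichotomy (k : ℕ) (l : ℕ) with h | h | h
  · exact main_lt P E G hP hE hG m k l h x y z w h1 h2 h3 h4
  · exact absurd (Fin.ext h) hkl
  · exact (main_lt P E G hP hE hG m l k h x z y w h3 h4 h1 h2).symm

end CubicalNerve
end
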